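/- arXiv:2512.12991 — 4 statements merged into one kernel-verified Lean document; each statement's English description precedes it below -/
import Mathlib

section
/- Let q ≥ 0. There exists a constant C > 0, independent of r, t, k, m, such that for all r > 0, all 0 < t ≤ r^α, and all k, m > 0 satisfying either k ≥ t^{1/α} or q < α + β, one has ∫_0^t (1 ∧ k/s^{1/α})^q · Φ((k∨s^{1/α})/r) · ℓ((k∨s^{1/α})/m) ds ≤ C·t·(1 ∧ k/t^{1/α})^q · Φ((k∨t^{1/α})/r) · ℓ((k∨t^{1/α})/m). -/
open Set Metric MeasureTheory Real Filter Topology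

noncomputable section

/-- `f` satisfies the lower scaling condition at zero with index `b`. -/
def HasLowerScaling (f : ℝ → ℝ) (b : ℝ) : Prop :=
  ∃ C : ℝ, 1 ≤ C ∧ ∀ s r : ℝ, 0 < s → s ≤ r → r ≤ 1 → C⁻¹ * (r / s) ^ b ≤ f r / f s

/-- `f` satisfies the upper scaling condition at zero with index `b`. -/
def HasUpperScaling (f : ℝ → ℝ) (b : ℝ) : Prop :=
  ∃ C : ℝ, 1 ≤ C ∧ ∀ s r : ℝ, 0 < s → s ≤ r → r ≤ 1 → f r / f s ≤ C * (r / s) ^ b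

/-- The lower Matuszewska index of `f` at zero equals `β`,
i.e. `β` is the supremum of the indices for which the lower scaling condition holds. -/
def LowerIndexIs (f : ℝ → ℝ) (β : ℝ) : Prop :=
  (∀ b : ℝ, b < β → HasLowerScaling f b) ∧ (∀ b : ℝ, β < b → ¬ HasLowerScaling f b)

/-- The upper Matuszewska index of `f` at zero equals `β`,
i.e. `β` is the infimum of the indices for which the upper scaling condition holds. -/
def UpperIndexIs (f : ℝ → ℝ) (β : ℝ) : Prop :=
  (∀ b : ℝ, β < b → HasUpperScaling f b) ∧ (∀ b : ℝ, b < β → ¬ HasUpperScaling f b)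

/-- `f` is almost increasing on `(0,1]`. -/
def AlmostIncreasingOn01 (f : ℝ → ℝ) : Prop :=
  ∃ C : ℝ, 1 ≤ C ∧ ∀ s r : ℝ, 0 < s → s ≤ r → r ≤ 1 → f s ≤ C * f r

/-- `f` is almost decreasing on `(0,1]`. -/
def AlmostDecreasingOn01 (f : ℝ → ℝ) : Prop :=
  ∃ C : ℝ, 1 ≤ C ∧ ∀ s r : ℝ, 0 < s → s ≤ r → r ≤ 1 → f r ≤ C * f s

/-- A positive Borel function on `(0,∞)`, equal to `1` on `[1,∞)`. -/
def StdFun (f : ℝ → ℝ) : Prop :=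
  Measurable f ∧ (∀ r : ℝ, 0 < r → 0 < f r) ∧ (∀ r : ℝ, 1 ≤ r → f r = 1)

/-- The scaling condition for the slowly varying factor `ℓ`, with parameters `β₁, β₂`. -/
def EllScaling (l : ℝ → ℝ) (β₁ β₂ : ℝ) : Prop :=
  ∀ ε : ℝ, 0 < ε → ∃ C : ℝ, 1 ≤ C ∧ ∀ s r : ℝ, 0 < s → s ≤ r → r ≤ 1 →
    C⁻¹ * (r / s) ^ (-(min ε β₁)) ≤ l r / l s ∧ l r / l s ≤ C * (r / s) ^ (min ε β₂)

/-- `l` has both Matuszewska indices at zero equal to `0`. -/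
def SlowlyVaryingScaling (l : ℝ → ℝ) : Prop :=
  ∀ ε : ℝ, 0 < ε → ∃ C : ℝ, 1 ≤ C ∧ ∀ s r : ℝ, 0 < s → s ≤ r → r ≤ 1 →
    C⁻¹ * (r / s) ^ (-ε) ≤ l r / l s ∧ l r / l s ≤ C * (r / s) ^ ε

/-- The distance to the boundary of `D`. -/
def dd {d : ℕ} (D : Set (EuclideanSpace ℝ (Fin d))) (x : EuclideanSpace ℝ (Fin d)) : ℝ :=
  Metric.infDist x (frontier D)

/-- The function `A_{f,g,h}(t,x,y)`. -/
def Afun {d : ℕ} (α : ℝ) (D : Set (EuclideanSpace ℝ (Fin d))) (f g h : ℝ → ℝ)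
    (t : ℝ) (x y : EuclideanSpace ℝ (Fin d)) : ℝ :=
  f (max (min (dd D x) (dd D y)) (t ^ (1 / α)) / dist x y) *
  g (max (max (dd D x) (dd D y)) (t ^ (1 / α)) / dist x y) *
  h (max (min (dd D x) (dd D y)) (t ^ (1 / α)) /
      min (max (max (dd D x) (dd D y)) (t ^ (1 / α))) (dist x y))

/-- The inward unit vector `𝐧ₓ = (x - Qₓ)/δ_D(x)`. -/
def nv {d : ℕ} (D : Set (EuclideanSpace ℝ (Fin d)))
    (Q : EuclideanSpace ℝ (Fin d) → EuclideanSpace ℝ (Fin d))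
    (x : EuclideanSpace ℝ (Fin d)) : EuclideanSpace ℝ (Fin d) :=
  (dd D x)⁻¹ • (x - Q x)

/-- `∫_a^b A_{f,g,h}(t,x,x+u𝐧ₓ) A_{f,g,h}(t,x+u𝐧ₓ,y) u^{-α-1} du`. -/
def Iint {d : ℕ} (α : ℝ) (D : Set (EuclideanSpace ℝ (Fin d)))
    (Q : EuclideanSpace ℝ (Fin d) → EuclideanSpace ℝ (Fin d))
    (f g h : ℝ → ℝ) (a b t : ℝ) (x y : EuclideanSpace ℝ (Fin d)) : ℝ :=
  ∫ u in Set.Ioo a b,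
    Afun α D f g h t x (x + u • nv D Q x) * Afun α D f g h t (x + u • nv D Q x) y *
      u ^ (-α - 1)

/-- `∫_a^b f₀(k₂/u) f₂(u/rr) l(k₁/u) u^{-α-1} du`. -/
def Jint (α : ℝ) (f₀ f₂ l : ℝ → ℝ) (a b rr k₁ k₂ : ℝ) : ℝ :=
  ∫ u in Set.Ioo a b, f₀ (k₂ / u) * f₂ (u / rr) * l (k₁ / u) * u ^ (-α - 1)

/-!
With `u = k ∨ s^{1/α}` and `T = t^{1/α} ≤ r`, the lower scaling of `Φ` at an index `b < β` and
of `ℓ` at `-ε` (extended past `1` because `ℓ = 1` there) bound the integrand by a constant times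
its value at `s = t` times `(u/T)^{b-q-ε}`. Choosing `b = q - α + 2ε` makes this exponent
`ε - α ∈ (-α, 0]`, so `(u/T)^{ε-α} ≤ (s/t)^{ε/α-1}`, whose integral over `(0,t)` is `(α/ε) t`.
If `k ≥ t^{1/α}` the integrand is constant.
-/

lemma min_one_div_eq_div_max {k x : ℝ} (hk : 0 < k) (hx : 0 < x) :
    min 1 (k / x) = k / max k x := by
  rcases le_total x k with h | h
  · rw [max_eq_left h, div_self hk.ne', min_eq_left ((one_le_div hx).2 h)]
  · rw [max_eq_right h, min_eq_right ((div_le_one hx).2 h)]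

lemma integrableOn_div_rpow_Ioo {t p : ℝ} (ht : 0 < t) (hp : -1 < p) :
    IntegrableOn (fun s ↦ (s / t) ^ p) (Ioo 0 t) := by
  have h := intervalIntegral.intervalIntegrable_rpow' (a := 0) (b := t) hp
  rw [intervalIntegrable_iff_integrableOn_Ioc_of_le ht.le] at h
  refine IntegrableOn.congr_fun ((h.mono_set Ioo_subset_Ioc_self).div_const (t ^ p))
    (fun s hs ↦ ?_) measurableSet_Ioo
  exact (div_rpow hs.1.le ht.le p).symm

lemma integral_div_rpow_Ioo {t p : ℝ} (ht : 0 < t) (hp : -1 < p) :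
    ∫ s in Ioo 0 t, (s / t) ^ p = t / (p + 1) := by
  rw [setIntegral_congr_fun measurableSet_Ioo (fun s hs ↦ div_rpow hs.1.le ht.le p),
    integral_div, ← integral_Ioc_eq_integral_Ioo, ← intervalIntegral.integral_of_le ht.le,
    integral_rpow (Or.inl hp), zero_rpow (by linarith), rpow_add ht, rpow_one]
  field_simp
  ring

lemma div_rpow_le_div_rpow_of_nonpos {α e s t u : ℝ} (hs : 0 < s) (ht : 0 < t)
    (hsu : s ^ (1 / α) ≤ u) (he : e ≤ 0) :
    (u / t ^ (1 / α)) ^ e ≤ (s / t) ^ (e / α) := by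
  calc (u / t ^ (1 / α)) ^ e ≤ (s ^ (1 / α) / t ^ (1 / α)) ^ e := by
        refine rpow_le_rpow_of_nonpos (by positivity) ?_ he
        gcongr
    _ = (s / t) ^ (e / α) := by
        rw [← div_rpow hs.le ht.le, ← rpow_mul (div_pos hs ht).le]
        ring_nf

lemma HasLowerScaling.le_mul_rpow {f : ℝ → ℝ} {b : ℝ} (hf : HasLowerScaling f b)
    (hpos : ∀ x, 0 < x → 0 < f x) :
    ∃ C, 1 ≤ C ∧ ∀ s r, 0 < s → s ≤ r → r ≤ 1 → f s ≤ C * (s / r) ^ b * f r := by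
  obtain ⟨C, hC, h⟩ := hf
  refine ⟨C, hC, fun s r hs hsr hr ↦ ?_⟩
  have hr0 := hs.trans_le hsr
  have hratio := (le_div_iff₀ (hpos s hs)).1 (h s r hs hsr hr)
  calc f s = C * (s / r) ^ b * (C⁻¹ * (r / s) ^ b * f s) := by
        rw [div_rpow hs.le hr0.le, div_rpow hr0.le hs.le]
        have := rpow_pos_of_pos hs b; have := rpow_pos_of_pos hr0 b
        field_simp
    _ ≤ C * (s / r) ^ b * f r := by gcongr

lemma HasLowerScaling.le_mul_rpow_of_nonpos {f : ℝ → ℝ} {b : ℝ} (hf : HasLowerScaling f b)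
    (hpos : ∀ x, 0 < x → 0 < f x) (hone : ∀ x, 1 ≤ x → f x = 1) (hb : b ≤ 0) :
    ∃ C, 1 ≤ C ∧ ∀ s r, 0 < s → s ≤ r → f s ≤ C * (s / r) ^ b * f r := by
  obtain ⟨C, hC, h⟩ := hf.le_mul_rpow hpos
  refine ⟨C, hC, fun s r hs hsr ↦ ?_⟩
  have hr := hs.trans_le hsr
  rcases le_total r 1 with hr1 | hr1
  · exact h s r hs hsr hr1
  rcases le_total 1 s with hs1 | hs1
  · have : 1 ≤ (s / r) ^ b := one_le_rpow_of_pos_of_le_one_of_nonpos (by positivity)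
      ((div_le_one hr).2 hsr) hb
    rw [hone s hs1, hone r hr1]
    nlinarith
  · calc f s ≤ C * (s / 1) ^ b * f 1 := h s 1 hs hs1 le_rfl
      _ ≤ C * (s / r) ^ b * f r := by
        rw [hone 1 le_rfl, hone r hr1]
        gcongr C * ?_ * 1
        exact rpow_le_rpow_of_nonpos (by positivity)
          (div_le_div_of_nonneg_left hs.le one_pos hr1) hb

lemma SlowlyVaryingScaling.hasLowerScaling {l : ℝ → ℝ} (hl : SlowlyVaryingScaling l)
    {ε : ℝ} (hε : 0 < ε) : HasLowerScaling l (-ε) := by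
  obtain ⟨C, hC, h⟩ := hl ε hε
  exact ⟨C, hC, fun s r hs hsr hr ↦ (h s r hs hsr hr).1⟩

lemma rpow_mul_mul_le_of_scaling {Φ l : ℝ → ℝ} {b ε CΦ Cl q k u T r m : ℝ}
    (hΦpos : ∀ x, 0 < x → 0 < Φ x) (hlpos : ∀ x, 0 < x → 0 < l x) (hCΦ : 0 ≤ CΦ)
    (hΦ : ∀ s r, 0 < s → s ≤ r → r ≤ 1 → Φ s ≤ CΦ * (s / r) ^ b * Φ r)
    (hl : ∀ s r, 0 < s → s ≤ r → l s ≤ Cl * (s / r) ^ (-ε) * l r)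
    (hk : 0 < k) (hku : k ≤ u) (huT : u ≤ T) (hTr : T ≤ r) (hm : 0 < m) :
    (k / u) ^ q * Φ (u / r) * l (u / m) ≤
      CΦ * Cl * ((k / T) ^ q * Φ (T / r) * l (T / m)) * (u / T) ^ (b - q - ε) := by
  have hu := hk.trans_le hku
  have hT := hu.trans_le huT
  have hr := hT.trans_le hTr
  have hkq : (k / u) ^ q = (k / T) ^ q * (u / T) ^ (-q) := by
    rw [div_rpow hk.le hu.le, div_rpow hk.le hT.le, rpow_neg (div_pos hu hT).le,
      div_rpow hu.le hT.le]
    have := rpow_pos_of_pos hu q; have := rpow_pos_of_pos hT q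
    field_simp
  have hΦu : Φ (u / r) ≤ CΦ * (u / T) ^ b * Φ (T / r) := by
    simpa only [div_div_div_cancel_right₀ hr.ne'] using
      hΦ (u / r) (T / r) (by positivity) (by gcongr) ((div_le_one hr).2 hTr)
  have hlu : l (u / m) ≤ Cl * (u / T) ^ (-ε) * l (T / m) := by
    simpa only [div_div_div_cancel_right₀ hm.ne'] using
      hl (u / m) (T / m) (by positivity) (by gcongr)
  have hΦu0 := hΦpos (u / r) (by positivity)
  have hlu0 := hlpos (u / m) (by positivity)
  have hΦT0 := hΦpos (T / r) (by positivity)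
  calc (k / u) ^ q * Φ (u / r) * l (u / m)
      ≤ (k / T) ^ q * (u / T) ^ (-q) * (CΦ * (u / T) ^ b * Φ (T / r)) *
          (Cl * (u / T) ^ (-ε) * l (T / m)) := by
        rw [hkq]; gcongr
    _ = CΦ * Cl * ((k / T) ^ q * Φ (T / r) * l (T / m)) * (u / T) ^ (b - q - ε) := by
        rw [sub_eq_add_neg, sub_eq_add_neg, rpow_add (by positivity),
          rpow_add (by positivity)]
        ring

def scaleWeight (α q : ℝ) (Φ l : ℝ → ℝ) (r k m s : ℝ) : ℝ :=
  min 1 (k / s ^ (1 / α)) ^ q * Φ (max k (s ^ (1 / α)) / r) * l (max k (s ^ (1 / α)) / m)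

section scaleWeight

variable {α q : ℝ} {Φ l : ℝ → ℝ} {r k m s : ℝ}

lemma scaleWeight_eq_div_max (hk : 0 < k) (hs : 0 < s) :
    scaleWeight α q Φ l r k m s =
      (k / max k (s ^ (1 / α))) ^ q * Φ (max k (s ^ (1 / α)) / r) *
        l (max k (s ^ (1 / α)) / m) := by
  rw [scaleWeight, min_one_div_eq_div_max hk (rpow_pos_of_pos hs _)]

lemma scaleWeight_of_rpow_le (hs : 0 < s) (hsk : s ^ (1 / α) ≤ k) :
    scaleWeight α q Φ l r k m s = Φ (k / r) * l (k / m) := by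
  rw [scaleWeight, max_eq_left hsk, min_eq_left ((one_le_div (rpow_pos_of_pos hs _)).2 hsk),
    one_rpow, one_mul]

lemma scaleWeight_nonneg (hΦ : ∀ x, 0 < x → 0 < Φ x) (hl : ∀ x, 0 < x → 0 < l x)
    (hr : 0 < r) (hk : 0 < k) (hm : 0 < m) (hs : 0 < s) :
    0 ≤ scaleWeight α q Φ l r k m s := by
  have hu : 0 < max k (s ^ (1 / α)) := hk.trans_le (le_max_left _ _)
  have := hΦ _ (div_pos hu hr)
  have := hl _ (div_pos hu hm)
  rw [scaleWeight_eq_div_max hk hs]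
  positivity

end scaleWeight

lemma setIntegral_scaleWeight_le_of_rpow_le {α q C r t k m : ℝ} {Φ l : ℝ → ℝ} (hα : 0 < α)
    (hΦ : ∀ x, 0 < x → 0 < Φ x) (hl : ∀ x, 0 < x → 0 < l x) (hC : 1 ≤ C)
    (hr : 0 < r) (ht : 0 < t) (hk : 0 < k) (hm : 0 < m) (htk : t ^ (1 / α) ≤ k) :
    ∫ s in Ioo 0 t, scaleWeight α q Φ l r k m s ≤ C * t * scaleWeight α q Φ l r k m t := by
  have hconst : EqOn (scaleWeight α q Φ l r k m) (fun _ ↦ Φ (k / r) * l (k / m)) (Ioo 0 t) :=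
    fun s hs ↦ scaleWeight_of_rpow_le hs.1
      ((rpow_le_rpow hs.1.le hs.2.le (by positivity)).trans htk)
  rw [setIntegral_congr_fun measurableSet_Ioo hconst, setIntegral_const,
    volume_real_Ioo_of_le ht.le, sub_zero, smul_eq_mul, scaleWeight_of_rpow_le ht htk, mul_assoc]
  have := hΦ (k / r) (by positivity)
  have := hl (k / m) (by positivity)
  exact le_mul_of_one_le_left (by positivity) hC

lemma scaleWeight_le_of_scaling {α q b ε CΦ Cl r t k m s : ℝ} {Φ l : ℝ → ℝ}
    (hΦpos : ∀ x, 0 < x → 0 < Φ x) (hlpos : ∀ x, 0 < x → 0 < l x) (hCΦ : 0 ≤ CΦ)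
    (hCl : 0 ≤ Cl) (hΦ : ∀ s r, 0 < s → s ≤ r → r ≤ 1 → Φ s ≤ CΦ * (s / r) ^ b * Φ r)
    (hl : ∀ s r, 0 < s → s ≤ r → l s ≤ Cl * (s / r) ^ (-ε) * l r) (he : b - q - ε ≤ 0)
    (hα : 0 < α) (hk : 0 < k) (hm : 0 < m) (hkt : k ≤ t ^ (1 / α)) (htr : t ^ (1 / α) ≤ r)
    (hs : 0 < s) (hst : s ≤ t) :
    scaleWeight α q Φ l r k m s ≤
      CΦ * Cl * scaleWeight α q Φ l r k m t * (s / t) ^ ((b - q - ε) / α) := by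
  have ht := hs.trans_le hst
  have hr := (rpow_pos_of_pos ht (1 / α)).trans_le htr
  rw [scaleWeight_eq_div_max hk hs, scaleWeight_eq_div_max hk ht, max_eq_right hkt]
  have := hΦpos (t ^ (1 / α) / r) (by positivity)
  have := hlpos (t ^ (1 / α) / m) (by positivity)
  calc _ ≤ CΦ * Cl * ((k / t ^ (1 / α)) ^ q * Φ (t ^ (1 / α) / r) * l (t ^ (1 / α) / m)) *
        (max k (s ^ (1 / α)) / t ^ (1 / α)) ^ (b - q - ε) :=
        rpow_mul_mul_le_of_scaling hΦpos hlpos hCΦ hΦ hl hk (le_max_left _ _)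
          (max_le hkt (rpow_le_rpow hs.le hst (by positivity))) htr hm
    _ ≤ _ := by
        gcongr
        exact div_rpow_le_div_rpow_of_nonpos hs ht (le_max_right _ _) he

lemma setIntegral_scaleWeight_le_of_scaling {α q b ε CΦ Cl r t k m : ℝ} {Φ l : ℝ → ℝ}
    (hΦpos : ∀ x, 0 < x → 0 < Φ x) (hlpos : ∀ x, 0 < x → 0 < l x) (hCΦ : 1 ≤ CΦ)
    (hCl : 1 ≤ Cl)
    (hΦ : ∀ s r, 0 < s → s ≤ r → r ≤ 1 → Φ s ≤ CΦ * (s / r) ^ b * Φ r)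
    (hl : ∀ s r, 0 < s → s ≤ r → l s ≤ Cl * (s / r) ^ (-ε) * l r)
    (he : b - q - ε ≤ 0) (hαe : -α < b - q - ε)
    (hα : 0 < α) (ht : 0 < t) (hk : 0 < k) (hm : 0 < m) (htr : t ^ (1 / α) ≤ r) :
    ∫ s in Ioo 0 t, scaleWeight α q Φ l r k m s ≤
      CΦ * Cl / ((b - q - ε) / α + 1) * t * scaleWeight α q Φ l r k m t := by
  have hr := (rpow_pos_of_pos ht (1 / α)).trans_le htr
  have hp : -1 < (b - q - ε) / α := by rw [lt_div_iff₀ hα]; linarith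
  have hp1 : 0 < (b - q - ε) / α + 1 := by linarith
  rcases le_or_gt (t ^ (1 / α)) k with htk | hkt
  · refine setIntegral_scaleWeight_le_of_rpow_le hα hΦpos hlpos ?_ hr ht hk hm htk
    rw [le_div_iff₀ hp1, one_mul]
    have : (b - q - ε) / α ≤ 0 := div_nonpos_of_nonpos_of_nonneg he hα.le
    nlinarith
  calc _ ≤ ∫ s in Ioo 0 t, CΦ * Cl * scaleWeight α q Φ l r k m t * (s / t) ^ ((b - q - ε) / α) :=
        integral_mono_of_nonneg
          (ae_restrict_of_forall_mem measurableSet_Ioo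
            fun s hs ↦ scaleWeight_nonneg hΦpos hlpos hr hk hm hs.1)
          ((integrableOn_div_rpow_Ioo ht hp).const_mul _)
          (ae_restrict_of_forall_mem measurableSet_Ioo fun s hs ↦
            scaleWeight_le_of_scaling hΦpos hlpos (by linarith) (by linarith) hΦ hl he hα hk hm
              hkt.le htr hs.1 hs.2.le)
    _ = _ := by
        rw [integral_const_mul, integral_div_rpow_Ioo ht hp]
        ring

theorem statement_13_general
    (α β : ℝ) (hα0 : 0 < α)
    (Φ l : ℝ → ℝ)
    (hΦ : StdFun Φ)
    (hΦlow : LowerIndexIs Φ β)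
    (hl : StdFun l) (hlscale : SlowlyVaryingScaling l)
    (q : ℝ) :
    ∃ C : ℝ, 0 < C ∧
      ∀ r t k m : ℝ, 0 < r → 0 < t → t ≤ r ^ α → 0 < k → 0 < m →
        (t ^ (1 / α) ≤ k ∨ q < α + β) →
        (∫ s in Set.Ioo (0 : ℝ) t,
            min 1 (k / s ^ (1 / α)) ^ q * Φ (max k (s ^ (1 / α)) / r) *
              l (max k (s ^ (1 / α)) / m))
          ≤ C * t * min 1 (k / t ^ (1 / α)) ^ q * Φ (max k (t ^ (1 / α)) / r) *
              l (max k (t ^ (1 / α)) / m) := by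
  by_cases hq : q < α + β
  · -- `b < β`, and the exponent `b - q - ε = ε - α` lies in `(-α, 0]`.
    set ε := min α (α + β - q) / 4 with hε_def
    have hε : 0 < ε := div_pos (lt_min hα0 (by linarith)) four_pos
    have hεα : ε ≤ α := by linarith [min_le_left α (α + β - q)]
    set b := q - α + 2 * ε with hb_def
    have hb : b < β := by linarith [min_le_right α (α + β - q)]
    obtain ⟨CΦ, hCΦ, hΦb⟩ := (hΦlow.1 b hb).le_mul_rpow hΦ.2.1
    obtain ⟨Cl, hCl, hlb⟩ :=
      (hlscale.hasLowerScaling hε).le_mul_rpow_of_nonpos hl.2.1 hl.2.2 (by linarith)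
    have hden : 0 < (b - q - ε) / α + 1 := by
      rw [div_add_one hα0.ne']; exact div_pos (by linarith) hα0
    refine ⟨CΦ * Cl / ((b - q - ε) / α + 1), div_pos (by positivity) hden,
      fun r t k m hr ht htr hk hm _ ↦ ?_⟩
    have htr' : t ^ (1 / α) ≤ r := by rwa [one_div, rpow_inv_le_iff_of_pos ht.le hr.le hα0]
    exact (setIntegral_scaleWeight_le_of_scaling hΦ.2.1 hl.2.1 hCΦ hCl hΦb hlb (by linarith)
      (by linarith) hα0 ht hk hm htr').trans_eq (by unfold scaleWeight; ring)
  · refine ⟨1, one_pos, fun r t k m hr ht _ hk hm hcase ↦ ?_⟩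
    exact (setIntegral_scaleWeight_le_of_rpow_le hα0 hΦ.2.1 hl.2.1 le_rfl hr ht hk hm
      (hcase.resolve_right hq)).trans_eq (by unfold scaleWeight; ring)

/-- Lemma 8.2, inequality for `ℓ((k∨s^{1/α})/m)`. -/
theorem statement_13
    (α β βs : ℝ) (hα0 : 0 < α) (hα2 : α < 2) (hβ : 0 ≤ β) (hβs : β ≤ βs)
    (Φ l : ℝ → ℝ)
    (hΦ : StdFun Φ) (hΦinc : AlmostIncreasingOn01 Φ)
    (hΦlow : LowerIndexIs Φ β) (hΦup : UpperIndexIs Φ βs)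
    (hl : StdFun l) (hlscale : SlowlyVaryingScaling l)
    (q : ℝ) (hq : 0 ≤ q) :
    ∃ C : ℝ, 0 < C ∧
      ∀ r t k m : ℝ, 0 < r → 0 < t → t ≤ r ^ α → 0 < k → 0 < m →
        (t ^ (1 / α) ≤ k ∨ q < α + β) →
        (∫ s in Set.Ioo (0 : ℝ) t,
            min 1 (k / s ^ (1 / α)) ^ q * Φ (max k (s ^ (1 / α)) / r) *
              l (max k (s ^ (1 / α)) / m))
          ≤ C * t * min 1 (k / t ^ (1 / α)) ^ q * Φ (max k (t ^ (1 / α)) / r) *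
              l (max k (t ^ (1 / α)) / m) :=
  statement_13_general α β hα0 Φ l hΦ hΦlow hl hlscale q
end
end

section
/- Let ε ∈ (0,1). For every δ > 0 there exists a constant C = C(ε,δ) > 0 such that for all x ∈ D and all r > 0: ∫ over {z ∈ D : |x−z| ≥ r} of δ_D(z)^{−ε}·|x−z|^{−d−δ} dz ≤ C·(δ_D(x) ∨ r)^{−ε}·r^{−δ}. -/
open Set Metric MeasureTheory Real Filter Topology

noncomputable section

open Module
open scoped ENNReal

/-!
Split `D \ ball x r` into the dyadic shells `s ≤ |x - z| < 2s`, `s = 2ᵏ r`. On such a shell the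
weight `|x - z|^{-d-p}` is at most `s^{-d-p}`, so it suffices to bound `∫_{shell} δ_D^{-ε}` by
`K (δ_D(x) ∨ s)^{-ε} s^d`. If `4s ≤ δ_D(x)`, then `δ_D ≥ δ_D(x)/2` on the shell. Otherwise the
shell is cut into the layers `s(1 + t/2) < |x - z| ≤ s(1 + t)`, `t = 2⁻ᵏ`; averaging the ball
estimate over balls of radius `≍ st` centred near a layer bounds its integral by
`K s^{d-ε} t^{1-ε}`, which is summable because `ε < 1`.

The ball estimate is stated with the Bochner integral, so it is void where `δ_D^{-ε}` is not
integrable. Integrability is only known on `D \ ball x r` (from that of the integrand, `D` being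
bounded), which is why only balls avoiding `ball x r` are used.
-/

theorem ENNReal.tsum_ofReal_mul_pow {c q : ℝ} (hc : 0 ≤ c) (hq₀ : 0 ≤ q) (hq₁ : q < 1) :
    ∑' k : ℕ, ENNReal.ofReal (c * q ^ k) = ENNReal.ofReal (c * (1 - q)⁻¹) := by
  rw [← ENNReal.ofReal_tsum_of_nonneg (fun k => by positivity)
    ((summable_geometric_of_lt_one hq₀ hq₁).mul_left c), tsum_mul_left,
    tsum_geometric_of_lt_one hq₀ hq₁]

theorem Real.rpow_neg_le_mul_rpow_neg {u v c ε : ℝ} (hv : 0 < v) (hc : 1 ≤ c) (h : v ≤ c * u)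
    (hε₀ : 0 ≤ ε) (hε₁ : ε ≤ 1) : u ^ (-ε) ≤ c * v ^ (-ε) := by
  have hc₀ : 0 < c := zero_lt_one.trans_le hc
  calc u ^ (-ε) ≤ (v / c) ^ (-ε) :=
        Real.rpow_le_rpow_of_nonpos (by positivity) ((div_le_iff₀' hc₀).2 h) (by linarith)
    _ = c ^ ε * v ^ (-ε) := by
        rw [Real.div_rpow hv.le hc₀.le, Real.rpow_neg hc₀.le, div_inv_eq_mul, mul_comm]
    _ ≤ c * v ^ (-ε) := by
        gcongr
        simpa using Real.rpow_le_rpow_of_exponent_le hc hε₁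

theorem Metric.infDist_rpow_neg_le {α : Type*} [PseudoMetricSpace α] {s : Set α} {x z : α}
    {ε : ℝ} (hε₀ : 0 ≤ ε) (hε₁ : ε ≤ 1) (hx : 0 < infDist x s) (hz : 2 * dist x z ≤ infDist x s) :
    infDist z s ^ (-ε) ≤ 2 * infDist x s ^ (-ε) :=
  Real.rpow_neg_le_mul_rpow_neg hx one_le_two
    (by linarith [infDist_le_infDist_add_dist (s := s) (x := x) (y := z)]) hε₀ hε₁

theorem setLIntegral_diff_ball_le_of_shell {X : Type*} [PseudoMetricSpace X] [MeasurableSpace X]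
    (μ : Measure X) (A : Set X) (F : X → ℝ≥0∞) {x : X} {r p M : ℝ} (hr : 0 < r) (hp : 0 < p)
    (hM : 0 ≤ M)
    (h : ∀ s, r ≤ s →
      ∫⁻ z in A ∩ dist x ⁻¹' Ico s (2 * s), F z ∂μ ≤ ENNReal.ofReal (M * s ^ (-p))) :
    ∫⁻ z in A \ ball x r, F z ∂μ ≤ ENNReal.ofReal (M * r ^ (-p) * (1 - 2 ^ (-p))⁻¹) := by
  have cover : A \ ball x r ⊆ ⋃ k : ℕ, A ∩ dist x ⁻¹' Ico (r * 2 ^ k) (2 * (r * 2 ^ k)) := by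
    rintro z ⟨hzA, hz⟩
    rw [mem_ball, not_lt, dist_comm] at hz
    obtain ⟨k, hk₁, hk₂⟩ := exists_nat_pow_near ((one_le_div hr).2 hz) one_lt_two
    refine mem_iUnion.2 ⟨k, hzA, ?_, ?_⟩
    · exact (le_div_iff₀' hr).1 hk₁
    · rw [div_lt_iff₀' hr, pow_succ] at hk₂; linarith
  have hscale : ∀ k : ℕ, (r * 2 ^ k) ^ (-p) = r ^ (-p) * (2 ^ (-p)) ^ k := fun k => by
    rw [Real.mul_rpow hr.le (by positivity), Real.rpow_pow_comm zero_le_two]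
  calc ∫⁻ z in A \ ball x r, F z ∂μ
      ≤ ∑' k : ℕ, ∫⁻ z in A ∩ dist x ⁻¹' Ico (r * 2 ^ k) (2 * (r * 2 ^ k)), F z ∂μ :=
        (lintegral_mono_set cover).trans (lintegral_iUnion_le _ _)
    _ ≤ ∑' k : ℕ, ENNReal.ofReal (M * r ^ (-p) * (2 ^ (-p)) ^ k) := by
        gcongr with k
        refine (h _ (le_mul_of_one_le_right hr.le (one_le_pow₀ one_le_two))).trans_eq ?_
        rw [hscale, mul_assoc]
    _ = ENNReal.ofReal (M * r ^ (-p) * (1 - 2 ^ (-p))⁻¹) :=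
        ENNReal.tsum_ofReal_mul_pow (by positivity) (by positivity)
          (Real.rpow_lt_one_of_one_lt_of_neg one_lt_two (neg_neg_of_pos hp))

theorem setLIntegral_mul_dist_rpow_le {X : Type*} [PseudoMetricSpace X] [MeasurableSpace X]
    (μ : Measure X) {g : X → ℝ} (hg : Measurable g) {A : Set X} {x : X} {s q : ℝ} (hs : 0 < s)
    (hq : q ≤ 0) (hA : ∀ z ∈ A, s ≤ dist x z) :
    ∫⁻ z in A, ENNReal.ofReal (g z * dist x z ^ q) ∂μ ≤
      (∫⁻ z in A, ENNReal.ofReal (g z) ∂μ) * ENNReal.ofReal (s ^ q) := by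
  rw [← lintegral_mul_const _ hg.ennreal_ofReal]
  refine setLIntegral_mono (hg.ennreal_ofReal.mul_const _) fun z hz => ?_
  rw [ENNReal.ofReal_mul' (Real.rpow_nonneg dist_nonneg _)]
  exact mul_le_mul_right (ENNReal.ofReal_le_ofReal (Real.rpow_le_rpow_of_nonpos hs (hA z hz) hq)) _

theorem layer_volume_ratio_le {n : ℕ} (hn : 1 ≤ n) {s t C a : ℝ} (hs : 0 < s) (ht₀ : 0 < t)
    (ht₁ : t ≤ 1) (hC : 0 ≤ C) (ha : 0 ≤ a) :
    C * (s * t / 2) ^ a * (n * (s * (1 + 2 * t)) ^ (n - 1) * (s * (1 + 2 * t) - s)) ≤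
      2 * 8 ^ n * 3 ^ (n - 1) * n * C * s ^ a * t ^ (a + 1 - n) * (s * t / 8) ^ n := by
  have hst : 0 < s * t := mul_pos hs ht₀
  have hρa : (s * t / 2) ^ a ≤ s ^ a * t ^ a := by
    rw [← Real.mul_rpow hs.le ht₀.le]; exact Real.rpow_le_rpow (by positivity) (by linarith) ha
  have hR : (s * (1 + 2 * t)) ^ (n - 1) ≤ (3 * s) ^ (n - 1) :=
    pow_le_pow_left₀ (by positivity) (by nlinarith) _
  have htpow : t ^ (a + 1 - n) * t ^ n = t ^ a * t := by
    rw [← Real.rpow_natCast, ← Real.rpow_add ht₀, sub_add_cancel, Real.rpow_add_one ht₀.ne']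
  have hspow : s ^ (n - 1) * s = s ^ n := by rw [← pow_succ, Nat.sub_add_cancel hn]
  have hwpow : 8 ^ n * (s * t / 8) ^ n = s ^ n * t ^ n := by rw [← mul_pow, ← mul_pow]; ring_nf
  calc C * (s * t / 2) ^ a * (n * (s * (1 + 2 * t)) ^ (n - 1) * (s * (1 + 2 * t) - s))
      ≤ C * (s ^ a * t ^ a) * (n * (3 * s) ^ (n - 1) * (2 * (s * t))) := by
        rw [show s * (1 + 2 * t) - s = 2 * (s * t) by ring]
        gcongr
    _ = 2 * 3 ^ (n - 1) * n * C * s ^ a * (t ^ a * t) * (s ^ (n - 1) * s) := by ring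
    _ = 2 * 8 ^ n * 3 ^ (n - 1) * n * C * s ^ a * t ^ (a + 1 - n) * (s * t / 8) ^ n := by
        rw [← htpow, hspow]
        linear_combination (2 * 3 ^ (n - 1) * n * C * s ^ a * t ^ (a + 1 - n)) * hwpow.symm

section
variable {E : Type*} [NormedAddCommGroup E] [NormedSpace ℝ E] [MeasurableSpace E] [BorelSpace E]
  [FiniteDimensional ℝ E] (μ : Measure E) [μ.IsAddHaarMeasure]

theorem setLIntegral_mul_measure_closedBall {G : E → ℝ≥0∞} (hG : Measurable G) {S : Set E}
    (hS : MeasurableSet S) (w : ℝ) :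
    (∫⁻ z in S, G z ∂μ) * μ (closedBall 0 w) = ∫⁻ y, ∫⁻ z in S ∩ closedBall y w, G z ∂μ ∂μ := by
  set W : Set (E × E) := {p | dist p.1 p.2 ≤ w}
  have hW : MeasurableSet W := measurableSet_le (by fun_prop) measurable_const
  have hF : Measurable fun p : E × E => S.indicator G p.2 * W.indicator 1 p :=
    ((hG.indicator hS).comp measurable_snd).mul (measurable_const.indicator hW)
  calc (∫⁻ z in S, G z ∂μ) * μ (closedBall 0 w)
      = ∫⁻ z, S.indicator G z * μ (closedBall z w) ∂μ := by
        simp_rw [Measure.addHaar_closedBall_center μ _ w]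
        rw [lintegral_mul_const _ (hG.indicator hS), lintegral_indicator hS]
    _ = ∫⁻ z, ∫⁻ y, S.indicator G z * W.indicator 1 (y, z) ∂μ ∂μ := by
        congr 1 with z
        rw [← lintegral_indicator_one measurableSet_closedBall,
          ← lintegral_const_mul _ (measurable_one.indicator measurableSet_closedBall)]
        rfl
    _ = ∫⁻ y, ∫⁻ z, S.indicator G z * W.indicator 1 (y, z) ∂μ ∂μ :=
        lintegral_lintegral_swap (hF.comp measurable_swap).aemeasurable
    _ = ∫⁻ y, ∫⁻ z in S ∩ closedBall y w, G z ∂μ ∂μ := by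
        congr 1 with y
        rw [← lintegral_indicator (hS.inter measurableSet_closedBall)]
        congr 1 with z
        by_cases hz : z ∈ S <;> by_cases hzy : dist z y ≤ w <;>
          simp [Set.indicator, W, hz, hzy, dist_comm y z]

theorem setLIntegral_le_of_forall_closedBall_le {G : E → ℝ≥0∞} (hG : Measurable G) {S T : Set E}
    (hS : MeasurableSet S) (hT : MeasurableSet T) {w : ℝ} (hw : 0 < w) {B : ℝ≥0∞}
    (h : ∀ y, (S ∩ closedBall y w).Nonempty → y ∈ T ∧ ∫⁻ z in S ∩ closedBall y w, G z ∂μ ≤ B) :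
    ∫⁻ z in S, G z ∂μ ≤ B * μ T / μ (closedBall 0 w) := by
  rw [ENNReal.le_div_iff_mul_le (.inl (measure_closedBall_pos μ 0 hw).ne')
    (.inl measure_closedBall_lt_top.ne), setLIntegral_mul_measure_closedBall μ hG hS,
    ← lintegral_indicator_const hT]
  refine lintegral_mono fun y => ?_
  by_cases hne : (S ∩ closedBall y w).Nonempty
  · obtain ⟨hyT, hle⟩ := h y hne
    rwa [indicator_of_mem hyT]
  · simp [not_nonempty_iff_eq_empty.1 hne]

theorem measure_closedBall_diff_ball_le [Nontrivial E] (x : E) {r R : ℝ} (hr : 0 ≤ r)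
    (hrR : r ≤ R) :
    μ (closedBall x R \ ball x r) ≤
      ENNReal.ofReal (finrank ℝ E * R ^ (finrank ℝ E - 1) * (R - r)) * μ (ball 0 1) := by
  rw [measure_sdiff (ball_subset_closedBall.trans (closedBall_subset_closedBall hrR))
      measurableSet_ball.nullMeasurableSet measure_ball_lt_top.ne,
    Measure.addHaar_closedBall μ x (hr.trans hrR), Measure.addHaar_ball μ x hr,
    ← ENNReal.sub_mul (fun _ _ => measure_ball_lt_top.ne),
    ← ENNReal.ofReal_sub _ (by positivity)]
  gcongr
  have := abs_pow_sub_pow_le R r (finrank ℝ E)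
  rw [abs_of_nonneg (sub_nonneg.2 (pow_le_pow_left₀ hr hrR _)), abs_of_nonneg (sub_nonneg.2 hrR),
    abs_of_nonneg (hr.trans hrR), abs_of_nonneg hr, max_eq_left hrR] at this
  linarith

theorem setLIntegral_layer_le [Nontrivial E] {D : Set E} (hD : MeasurableSet D) {G : E → ℝ≥0∞}
    (hG : Measurable G) {x : E} {s t C a : ℝ} (hs : 0 < s) (ht₀ : 0 < t) (ht₁ : t ≤ 1)
    (hC : 0 ≤ C) (ha : 0 ≤ a)
    (hloc : ∀ y ∈ D, ∀ ρ > 0, s + ρ ≤ dist x y →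
      ∫⁻ z in D ∩ ball y ρ, G z ∂μ ≤ ENNReal.ofReal (C * ρ ^ a)) :
    ∫⁻ z in D ∩ dist x ⁻¹' Ioc (s * (1 + t / 2)) (s * (1 + t)), G z ∂μ ≤
      ENNReal.ofReal (2 * 8 ^ finrank ℝ E * 3 ^ (finrank ℝ E - 1) * finrank ℝ E * C *
        s ^ a * t ^ (a + 1 - finrank ℝ E)) := by
  set n := finrank ℝ E
  set S := D ∩ dist x ⁻¹' Ioc (s * (1 + t / 2)) (s * (1 + t))
  set w := s * t / 8 with hw
  set ρ := s * t / 2 with hρ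
  set T := closedBall x (s * (1 + 2 * t)) \ ball x s
  -- a closed `w`-ball meeting the layer at `z₀` lies in `ball z₀ ρ`, which avoids `ball x s`
  have hcover : ∀ y, (S ∩ closedBall y w).Nonempty →
      y ∈ T ∧ ∫⁻ z in S ∩ closedBall y w, G z ∂μ ≤ ENNReal.ofReal (C * ρ ^ a) := by
    rintro y ⟨z₀, ⟨hz₀D, hz₀₁, hz₀₂⟩, hz₀y⟩
    rw [mem_closedBall'] at hz₀y
    have h₁ := dist_triangle_right x y z₀
    have h₂ := dist_triangle x y z₀
    refine ⟨⟨mem_closedBall'.2 (by linarith), fun hy => ?_⟩, ?_⟩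
    · rw [mem_ball'] at hy; linarith
    · refine (lintegral_mono_set (t := D ∩ ball z₀ ρ) fun z hz => ⟨hz.1.1, ?_⟩).trans
        (hloc z₀ hz₀D ρ (by positivity) (by linarith))
      rw [mem_ball]; linarith [dist_triangle z y z₀, mem_closedBall.1 hz.2]
  have hSm : MeasurableSet S := hD.inter (measurableSet_Ioc.preimage (by fun_prop))
  have hTm : MeasurableSet T := measurableSet_closedBall.diff measurableSet_ball
  refine (setLIntegral_le_of_forall_closedBall_le μ hG hSm hTm (by positivity) hcover).trans
    (ENNReal.div_le_of_le_mul ?_)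
  have hreal : C * ρ ^ a * (n * (s * (1 + 2 * t)) ^ (n - 1) * (s * (1 + 2 * t) - s)) ≤
      2 * 8 ^ n * 3 ^ (n - 1) * n * C * s ^ a * t ^ (a + 1 - n) * w ^ n :=
    layer_volume_ratio_le finrank_pos hs ht₀ ht₁ hC ha
  calc ENNReal.ofReal (C * ρ ^ a) * μ T
      ≤ ENNReal.ofReal (C * ρ ^ a) *
          (ENNReal.ofReal (n * (s * (1 + 2 * t)) ^ (n - 1) * (s * (1 + 2 * t) - s)) *
            μ (ball 0 1)) := by
        gcongr
        exact measure_closedBall_diff_ball_le μ x hs.le (by nlinarith)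
    _ ≤ ENNReal.ofReal (2 * 8 ^ n * 3 ^ (n - 1) * n * C * s ^ a * t ^ (a + 1 - n) * w ^ n) *
          μ (ball 0 1) := by
        rw [← mul_assoc, ← ENNReal.ofReal_mul (by positivity)]
        gcongr
    _ = _ := by
        rw [Measure.addHaar_closedBall μ 0 (by positivity), ← mul_assoc,
          ← ENNReal.ofReal_mul (by positivity)]

theorem setLIntegral_shell_le [Nontrivial E] {D : Set E} (hD : MeasurableSet D) {G : E → ℝ≥0∞}
    (hG : Measurable G) {x : E} {s C a : ℝ} (hs : 0 < s) (hC : 0 ≤ C)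
    (ha : (finrank ℝ E : ℝ) - 1 < a)
    (hloc : ∀ y ∈ D, ∀ ρ > 0, s + ρ ≤ dist x y →
      ∫⁻ z in D ∩ ball y ρ, G z ∂μ ≤ ENNReal.ofReal (C * ρ ^ a)) :
    ∫⁻ z in D ∩ dist x ⁻¹' Ico s (2 * s), G z ∂μ ≤
      ENNReal.ofReal (2 * 8 ^ finrank ℝ E * 3 ^ (finrank ℝ E - 1) * finrank ℝ E * C * s ^ a *
        (1 - 2⁻¹ ^ (a + 1 - finrank ℝ E))⁻¹) := by
  set n := finrank ℝ E
  set K := 2 * 8 ^ n * 3 ^ (n - 1) * n * C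
  have ha₀ : 0 ≤ a := by
    have : (1 : ℝ) ≤ n := by exact_mod_cast (finrank_pos : 0 < n)
    linarith
  set L : ℕ → Set E := fun k => D ∩ dist x ⁻¹' Ioc (s * (1 + 2⁻¹ ^ k / 2)) (s * (1 + 2⁻¹ ^ k))
  have cover : D ∩ dist x ⁻¹' Ico s (2 * s) ⊆ sphere x s ∪ ⋃ k, L k := by
    rintro z ⟨hzD, hz₁, hz₂⟩
    rcases hz₁.eq_or_lt with heq | hlt
    · exact .inl (by rw [mem_sphere, dist_comm]; exact heq.symm)
    obtain ⟨k, hk₁, hk₂⟩ := exists_nat_pow_near_of_lt_one (x := (dist x z - s) / s)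
      (div_pos (by linarith) hs) ((div_le_one hs).2 (by linarith)) (by norm_num : (0 : ℝ) < 2⁻¹)
      (by norm_num)
    rw [lt_div_iff₀ hs, pow_succ] at hk₁
    rw [div_le_iff₀ hs] at hk₂
    refine .inr (mem_iUnion.2 ⟨k, hzD, ?_⟩)
    simp only [mem_preimage, mem_Ioc]
    constructor <;> nlinarith
  have hratio : (0 : ℝ) ≤ 2⁻¹ ^ (a + 1 - n) ∧ (2⁻¹ : ℝ) ^ (a + 1 - n) < 1 :=
    ⟨by positivity, Real.rpow_lt_one (by norm_num) (by norm_num) (by linarith)⟩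
  calc ∫⁻ z in D ∩ dist x ⁻¹' Ico s (2 * s), G z ∂μ
      ≤ ∫⁻ z in sphere x s, G z ∂μ + ∫⁻ z in ⋃ k, L k, G z ∂μ :=
        (lintegral_mono_set cover).trans (lintegral_union_le _ _ _)
    _ ≤ ∑' k, ∫⁻ z in L k, G z ∂μ := by
        rw [setLIntegral_measure_zero _ _ (Measure.addHaar_sphere μ x s), zero_add]
        exact lintegral_iUnion_le _ _
    _ ≤ ∑' k : ℕ, ENNReal.ofReal (K * s ^ a * (2⁻¹ ^ (a + 1 - n)) ^ k) := by
        gcongr with k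
        refine (setLIntegral_layer_le μ hD hG hs (by positivity) (pow_le_one₀ (by norm_num)
          (by norm_num)) hC ha₀ hloc).trans_eq ?_
        rw [← Real.rpow_pow_comm (by norm_num)]
    _ = ENNReal.ofReal (K * s ^ a * (1 - 2⁻¹ ^ (a + 1 - n))⁻¹) :=
        ENNReal.tsum_ofReal_mul_pow (by positivity) hratio.1 hratio.2

end

section
variable {d : ℕ} {D : Set (EuclideanSpace ℝ (Fin d))} {ε : ℝ}

theorem setLIntegral_dd_rpow_shell_le_of_le_dd (hε₀ : 0 ≤ ε) (hε₁ : ε ≤ 1)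
    {x : EuclideanSpace ℝ (Fin d)} {s : ℝ} (hs : 0 < s) (hsx : 4 * s ≤ dd D x) :
    ∫⁻ z in D ∩ dist x ⁻¹' Ico s (2 * s), ENNReal.ofReal (dd D z ^ (-ε)) ≤
      ENNReal.ofReal (2 * dd D x ^ (-ε)) * volume (ball x (2 * s)) := by
  unfold dd at hsx ⊢
  calc ∫⁻ z in D ∩ dist x ⁻¹' Ico s (2 * s), ENNReal.ofReal (dd D z ^ (-ε))
      ≤ ∫⁻ _ in D ∩ dist x ⁻¹' Ico s (2 * s), ENNReal.ofReal (2 * dd D x ^ (-ε)) :=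
        setLIntegral_mono measurable_const fun z hz => ENNReal.ofReal_le_ofReal
          (infDist_rpow_neg_le hε₀ hε₁ (by linarith) (by linarith [hz.2.2]))
    _ ≤ ∫⁻ _ in ball x (2 * s), ENNReal.ofReal (2 * dd D x ^ (-ε)) :=
        lintegral_mono_set fun z hz => mem_ball'.2 hz.2.2
    _ = ENNReal.ofReal (2 * dd D x ^ (-ε)) * volume (ball x (2 * s)) := setLIntegral_const _ _

theorem exists_setLIntegral_dd_rpow_shell_le [NeZero d] (hD : MeasurableSet D) (hε₀ : 0 ≤ ε)
    (hε₁ : ε < 1) {C : ℝ} (hC : 0 ≤ C) :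
    ∃ K > 0, ∀ x s, 0 < s →
      (∀ y ∈ D, ∀ ρ > 0, s + ρ ≤ dist x y →
        ∫⁻ z in D ∩ ball y ρ, ENNReal.ofReal (dd D z ^ (-ε)) ≤
          ENNReal.ofReal (C * ρ ^ ((d : ℝ) - ε))) →
      ∫⁻ z in D ∩ dist x ⁻¹' Ico s (2 * s), ENNReal.ofReal (dd D z ^ (-ε)) ≤
        ENNReal.ofReal (K * max (dd D x) s ^ (-ε) * s ^ d) := by
  obtain ⟨V, hV, hVeq⟩ : ∃ V > 0, volume (ball (0 : EuclideanSpace ℝ (Fin d)) 1) = .ofReal V :=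
    ⟨_, ENNReal.toReal_pos (measure_ball_pos _ _ one_pos).ne' measure_ball_lt_top.ne,
      (ENNReal.ofReal_toReal measure_ball_lt_top.ne).symm⟩
  have hq : (2⁻¹ : ℝ) ^ (1 - ε) < 1 := Real.rpow_lt_one (by norm_num) (by norm_num) (by linarith)
  set Kb := 2 * 8 ^ d * 3 ^ (d - 1) * d * C * (1 - 2⁻¹ ^ (1 - ε))⁻¹
  have hKb : 0 ≤ Kb := by have := sub_pos.2 hq; positivity
  refine ⟨2 ^ (d + 1) * V + 4 * Kb, by positivity, fun x s hs hloc => ?_⟩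
  have hδ : 0 ≤ dd D x ^ (-ε) := Real.rpow_nonneg infDist_nonneg _
  rcases le_or_gt (4 * s) (dd D x) with hsx | hsx
  · calc _ ≤ ENNReal.ofReal (2 * dd D x ^ (-ε)) * volume (ball x (2 * s)) :=
          setLIntegral_dd_rpow_shell_le_of_le_dd hε₀ hε₁.le hs hsx
      _ = ENNReal.ofReal (2 ^ (d + 1) * V * max (dd D x) s ^ (-ε) * s ^ d) := by
          rw [Measure.addHaar_ball_of_pos _ _ (by positivity), finrank_euclideanSpace_fin,
            hVeq, ← ENNReal.ofReal_mul (by positivity),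
            ← ENNReal.ofReal_mul (by positivity), max_eq_left (by linarith)]
          ring_nf
      _ ≤ _ := by gcongr; linarith
  · have hshell := setLIntegral_shell_le (a := (d : ℝ) - ε) volume hD
      ((continuous_infDist_pt _).measurable.pow_const _).ennreal_ofReal hs hC
      (by simp; linarith) hloc
    simp only [finrank_euclideanSpace_fin, show (d : ℝ) - ε + 1 - d = 1 - ε by ring] at hshell
    refine hshell.trans (ENNReal.ofReal_le_ofReal ?_)
    have hs_max : s ^ (-ε) ≤ 4 * max (dd D x) s ^ (-ε) :=
      Real.rpow_neg_le_mul_rpow_neg (lt_max_of_lt_right hs) (by norm_num)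
        (max_le (by linarith) (by linarith)) hε₀ hε₁.le
    calc _ = Kb * s ^ (-ε) * s ^ d := by
          rw [sub_eq_neg_add, Real.rpow_add hs, Real.rpow_natCast]; ring
      _ ≤ Kb * (4 * max (dd D x) s ^ (-ε)) * s ^ d := by gcongr
      _ ≤ _ := by
          rw [← mul_assoc, mul_comm Kb]
          gcongr
          exact le_add_of_nonneg_left (by positivity)

theorem integrableOn_dd_rpow_diff_ball (hDb : Bornology.IsBounded D) (hD : MeasurableSet D)
    {x : EuclideanSpace ℝ (Fin d)} {r p : ℝ} (hr : 0 < r) (hp : 0 ≤ p)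
    (hf : IntegrableOn (fun z => dd D z ^ (-ε) * dist x z ^ (-(d : ℝ) - p)) (D \ ball x r)) :
    IntegrableOn (fun z => dd D z ^ (-ε)) (D \ ball x r) := by
  obtain ⟨R, hR⟩ := hDb.subset_closedBall x
  set R' := max R r
  have hR' : 0 < R' := lt_max_of_lt_right hr
  have hw : 0 < R' ^ (-(d : ℝ) - p) := Real.rpow_pos_of_pos hR' _
  refine (hf.const_mul (R' ^ (-(d : ℝ) - p))⁻¹).mono'
    ((continuous_infDist_pt _).measurable.pow_const _).aestronglyMeasurable
    (ae_restrict_of_forall_mem (hD.diff measurableSet_ball) fun z ⟨hzD, hzx⟩ => ?_)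
  have hxz : r ≤ dist x z := by simpa [dist_comm] using hzx
  have hdδ : 0 ≤ dd D z ^ (-ε) := Real.rpow_nonneg infDist_nonneg _
  have hq : -(d : ℝ) - p ≤ 0 := by linarith [d.cast_nonneg (α := ℝ)]
  calc ‖dd D z ^ (-ε)‖ = (R' ^ (-(d : ℝ) - p))⁻¹ * (dd D z ^ (-ε) * R' ^ (-(d : ℝ) - p)) := by
        rw [Real.norm_of_nonneg hdδ]; field_simp
    _ ≤ (R' ^ (-(d : ℝ) - p))⁻¹ * (dd D z ^ (-ε) * dist x z ^ (-(d : ℝ) - p)) :=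
        mul_le_mul_of_nonneg_left (mul_le_mul_of_nonneg_left (Real.rpow_le_rpow_of_nonpos
          (hr.trans_le hxz) ((mem_closedBall'.1 (hR hzD)).trans (le_max_left _ _)) hq) hdδ)
          (inv_nonneg.2 hw.le)

theorem lintegral_dd_rpow_ball_le (hε₀ : 0 ≤ ε) {C₀ : ℝ} (hC₀ : 0 ≤ C₀)
    (hball : ∀ x ∈ D, ∀ ρ : ℝ, 0 < ρ →
      (∫ z in D ∩ ball x ρ, dd D z ^ (-ε)) ≤ C₀ * max (dd D x) ρ ^ (-ε) * ρ ^ (d : ℝ))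
    {x : EuclideanSpace ℝ (Fin d)} {r : ℝ}
    (hint : IntegrableOn (fun z => dd D z ^ (-ε)) (D \ ball x r)) :
    ∀ y ∈ D, ∀ ρ > 0, r + ρ ≤ dist x y →
      ∫⁻ z in D ∩ ball y ρ, ENNReal.ofReal (dd D z ^ (-ε)) ≤
        ENNReal.ofReal (C₀ * ρ ^ ((d : ℝ) - ε)) := by
  intro y hy ρ hρ hxy
  have hsub : D ∩ ball y ρ ⊆ D \ ball x r := fun z hz =>
    ⟨hz.1, fun hzx => by linarith [dist_triangle x z y, mem_ball.1 hz.2, mem_ball'.1 hzx]⟩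
  rw [← ofReal_integral_eq_lintegral_ofReal (hint.mono_set hsub)
    (ae_of_all _ fun z => Real.rpow_nonneg infDist_nonneg _)]
  refine ENNReal.ofReal_le_ofReal ((hball y hy ρ hρ).trans ?_)
  rw [sub_eq_add_neg, Real.rpow_add hρ, mul_comm (ρ ^ (d : ℝ)), mul_assoc]
  exact mul_le_mul_of_nonneg_left (mul_le_mul_of_nonneg_right
    (Real.rpow_le_rpow_of_nonpos hρ (le_max_right _ _) (neg_nonpos.2 hε₀))
    (Real.rpow_nonneg hρ.le _)) hC₀

theorem setLIntegral_dd_rpow_mul_dist_shell_le {K : ℝ} (hK : 0 ≤ K) {x : EuclideanSpace ℝ (Fin d)}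
    {r s p : ℝ} (hr : 0 < r) (hrs : r ≤ s) (hp : 0 ≤ p) (hε₀ : 0 ≤ ε)
    (hshell : ∫⁻ z in D ∩ dist x ⁻¹' Ico s (2 * s), ENNReal.ofReal (dd D z ^ (-ε)) ≤
      ENNReal.ofReal (K * max (dd D x) s ^ (-ε) * s ^ d)) :
    ∫⁻ z in D ∩ dist x ⁻¹' Ico s (2 * s),
        ENNReal.ofReal (dd D z ^ (-ε) * dist x z ^ (-(d : ℝ) - p)) ≤
      ENNReal.ofReal (K * max (dd D x) r ^ (-ε) * s ^ (-p)) := by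
  have hs : 0 < s := hr.trans_le hrs
  calc ∫⁻ z in D ∩ dist x ⁻¹' Ico s (2 * s),
        ENNReal.ofReal (dd D z ^ (-ε) * dist x z ^ (-(d : ℝ) - p))
      ≤ (∫⁻ z in D ∩ dist x ⁻¹' Ico s (2 * s), ENNReal.ofReal (dd D z ^ (-ε))) *
          ENNReal.ofReal (s ^ (-(d : ℝ) - p)) :=
        setLIntegral_mul_dist_rpow_le volume ((continuous_infDist_pt _).measurable.pow_const _) hs
          (by linarith [d.cast_nonneg (α := ℝ)]) fun z hz => hz.2.1
    _ ≤ ENNReal.ofReal (K * max (dd D x) s ^ (-ε) * s ^ d) *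
          ENNReal.ofReal (s ^ (-(d : ℝ) - p)) := by gcongr
    _ = ENNReal.ofReal (K * max (dd D x) s ^ (-ε) * s ^ (-p)) := by
        rw [← ENNReal.ofReal_mul (by positivity), mul_assoc, ← Real.rpow_natCast,
          ← Real.rpow_add hs]
        ring_nf
    _ ≤ _ := ENNReal.ofReal_le_ofReal <| mul_le_mul_of_nonneg_right (mul_le_mul_of_nonneg_left
        (Real.rpow_le_rpow_of_nonpos (lt_max_of_lt_right hr) (max_le_max_left _ hrs)
          (neg_nonpos.2 hε₀)) hK) (Real.rpow_nonneg hs.le _)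

end

/-- Lemma 8.4: weighted tail integral near the boundary. -/
theorem statement_15
    (d : ℕ) (hd : 2 ≤ d)
    (D : Set (EuclideanSpace ℝ (Fin d))) (hDopen : IsOpen D)
    (hDbdd : Bornology.IsBounded D)
    (ε : ℝ) (hε0 : 0 < ε) (hε1 : ε < 1)
    (C₀ : ℝ) (hC₀ : 0 < C₀)
    (hball : ∀ x ∈ D, ∀ ρ : ℝ, 0 < ρ →
      (∫ z in D ∩ Metric.ball x ρ, dd D z ^ (-ε))
        ≤ C₀ * max (dd D x) ρ ^ (-ε) * ρ ^ (d : ℝ)) :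
    ∀ p : ℝ, 0 < p → ∃ C : ℝ, 0 < C ∧
      ∀ x ∈ D, ∀ r : ℝ, 0 < r →
        (∫ z in D \ Metric.ball x r, dd D z ^ (-ε) * dist x z ^ (-(d : ℝ) - p))
          ≤ C * max (dd D x) r ^ (-ε) * r ^ (-p) := by
  have : NeZero d := ⟨by omega⟩
  have hD := hDopen.measurableSet
  intro p hp
  obtain ⟨K, hK, hshell⟩ := exists_setLIntegral_dd_rpow_shell_le hD hε0.le hε1 hC₀.le
  have hq : 0 < 1 - (2 : ℝ) ^ (-p) :=
    sub_pos.2 (Real.rpow_lt_one_of_one_lt_of_neg one_lt_two (by linarith))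
  refine ⟨K * (1 - 2 ^ (-p))⁻¹, by positivity, fun x hx r hr => ?_⟩
  by_cases hf : IntegrableOn (fun z => dd D z ^ (-ε) * dist x z ^ (-(d : ℝ) - p)) (D \ ball x r)
  swap
  · rw [integral_undef hf]; positivity
  have hloc := lintegral_dd_rpow_ball_le hε0.le hC₀.le hball
    (integrableOn_dd_rpow_diff_ball hDbdd hD hr hp.le hf)
  rw [integral_eq_lintegral_of_nonneg_ae (f := fun z => dd D z ^ (-ε) * dist x z ^ (-(d : ℝ) - p))
    (ae_of_all _ fun z => mul_nonneg (Real.rpow_nonneg infDist_nonneg _)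
      (Real.rpow_nonneg dist_nonneg _)) hf.aestronglyMeasurable]
  refine ENNReal.toReal_le_of_le_ofReal (by positivity) ?_
  refine (setLIntegral_diff_ball_le_of_shell volume D _ hr hp (by positivity) fun s hs =>
    setLIntegral_dd_rpow_mul_dist_shell_le hK.le hr hs hp.le hε0.le
      (hshell x s (hr.trans_le hs) fun y hy ρ hρ h => hloc y hy ρ hρ (by linarith))).trans_eq ?_
  ring_nf
end
end

section
/- Let Φ₀ := Φ₁·ℓ. For every R ≥ 1, every η ∈ (0,1] and every ε > 0 there exists a constant C = C(R,η,ε) ≥ 1 such that C⁻¹·(r/s)^{(β₁−ε)₊} ≤ Φ₀(r)/Φ₀(s) ≤ C·(r/s)^{β₁*+ε} for all 0 < ηs ≤ r ≤ R, where (β₁−ε)₊ := max(β₁−ε, 0). In particular, Φ₀ is almost increasing on (0,1]. -/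
open Set Metric MeasureTheory Real Filter Topology

noncomputable section

lemma core_scaling (β₁ β₁s β₂ : ℝ) (hβ₁ : 0 ≤ β₁) (hβ₁s : β₁ ≤ β₁s)
    (Φ₁ l : ℝ → ℝ) (hΦ₁pos : ∀ r, 0 < r → 0 < Φ₁ r) (hlpos : ∀ r, 0 < r → 0 < l r)
    (hΦ₁inc : AlmostIncreasingOn01 Φ₁)
    (hΦ₁low : ∀ b, b < β₁ → HasLowerScaling Φ₁ b)
    (hΦ₁up : ∀ b, β₁s < b → HasUpperScaling Φ₁ b)
    (hlscale : EllScaling l β₁ β₂)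
    (ε : ℝ) (hε : 0 < ε) :
    ∃ K : ℝ, 1 ≤ K ∧ ∀ s r : ℝ, 0 < s → s ≤ r → r ≤ 1 →
      K⁻¹ * (r/s) ^ max (β₁ - ε) 0 ≤ (Φ₁ r * l r) / (Φ₁ s * l s) ∧
      (Φ₁ r * l r) / (Φ₁ s * l s) ≤ K * (r/s) ^ (β₁s + ε) := by
  -- lower bound
  have hlow : ∃ K₁ : ℝ, 1 ≤ K₁ ∧ ∀ s r : ℝ, 0 < s → s ≤ r → r ≤ 1 →
      K₁⁻¹ * (r/s) ^ max (β₁ - ε) 0 ≤ (Φ₁ r / Φ₁ s) * (l r / l s) := by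
    rcases eq_or_lt_of_le hβ₁ with hz | hpos
    · -- β₁ = 0
      obtain ⟨C₁, hC₁, h₁⟩ := hΦ₁inc
      obtain ⟨C₃, hC₃, h₃⟩ := hlscale ε hε
      refine ⟨C₁ * C₃, le_trans hC₁ (le_mul_of_one_le_right (by linarith) hC₃), ?_⟩
      intro s r hs hsr hr1
      have hr : 0 < r := lt_of_lt_of_le hs hsr
      have hΦs := hΦ₁pos s hs
      have hΦr := hΦ₁pos r hr
      have hmax : max (β₁ - ε) 0 = 0 := by
        rw [max_eq_right]; linarith [hz]
      have hmin : min ε β₁ = 0 := by rw [← hz]; simp [min_eq_right hε.le]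
      have hl1 : C₃⁻¹ ≤ l r / l s := by
        have := (h₃ s r hs hsr hr1).1
        rwa [hmin, neg_zero, rpow_zero, mul_one] at this
      have hf1 : C₁⁻¹ ≤ Φ₁ r / Φ₁ s := by
        rw [le_div_iff₀ hΦs, inv_mul_le_iff₀ (by linarith : (0:ℝ) < C₁)]
        exact h₁ s r hs hsr hr1
      rw [hmax, rpow_zero, mul_one, mul_inv]
      have := mul_le_mul hf1 hl1 (by positivity) (by positivity)
      linarith [this]
    · -- β₁ > 0
      set δ' := min ε β₁ / 2 with hδ'def
      have hδ' : 0 < δ' := by positivity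
      have hδ'β : δ' ≤ β₁ := by
        have : min ε β₁ ≤ β₁ := min_le_right _ _
        linarith
      obtain ⟨C₂, hC₂, h₂⟩ := hΦ₁low (β₁ - δ') (by linarith)
      obtain ⟨C₃, hC₃, h₃⟩ := hlscale δ' hδ'
      refine ⟨C₂ * C₃, le_trans hC₂ (le_mul_of_one_le_right (by linarith) hC₃), ?_⟩
      intro s r hs hsr hr1
      have hr : 0 < r := lt_of_lt_of_le hs hsr
      have hx : (0:ℝ) < r / s := by positivity
      have hmin : min δ' β₁ = δ' := min_eq_left hδ'β
      have hΦs := hΦ₁pos s hs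
      have hΦr := hΦ₁pos r hr
      have hC₃0 : (0:ℝ) < C₃ := by linarith
      have hbl := h₂ s r hs hsr hr1
      have hll := (h₃ s r hs hsr hr1).1
      rw [hmin] at hll
      have hmul := mul_le_mul hbl hll (by positivity) (by positivity)
      have hexp : max (β₁ - ε) 0 = (β₁ - δ') + (-δ') := by
        rcases le_total ε β₁ with h | h
        · rw [max_eq_left (by linarith)]; rw [hδ'def, min_eq_left h]; ring
        · rw [max_eq_right (by linarith)]; rw [hδ'def, min_eq_right h]; ring
      calc (C₂ * C₃)⁻¹ * (r/s) ^ max (β₁ - ε) 0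
          = (C₂⁻¹ * (r/s) ^ (β₁ - δ')) * (C₃⁻¹ * (r/s) ^ (-δ')) := by
            rw [hexp, rpow_add hx (β₁ - δ') (-δ')]; ring
        _ ≤ (Φ₁ r / Φ₁ s) * (l r / l s) := hmul
  -- upper bound
  have hup : ∃ K₂ : ℝ, 1 ≤ K₂ ∧ ∀ s r : ℝ, 0 < s → s ≤ r → r ≤ 1 →
      (Φ₁ r / Φ₁ s) * (l r / l s) ≤ K₂ * (r/s) ^ (β₁s + ε) := by
    obtain ⟨C₄, hC₄, h₄⟩ := hΦ₁up (β₁s + ε/2) (by linarith)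
    obtain ⟨C₅, hC₅, h₅⟩ := hlscale (ε/2) (by linarith)
    refine ⟨C₄ * C₅, le_trans hC₄ (le_mul_of_one_le_right (by linarith) hC₅), ?_⟩
    intro s r hs hsr hr1
    have hr : 0 < r := lt_of_lt_of_le hs hsr
    have hx : (0:ℝ) < r / s := by positivity
    have hx1 : (1:ℝ) ≤ r / s := (one_le_div hs).2 hsr
    have hbu := h₄ s r hs hsr hr1
    have hlu := (h₅ s r hs hsr hr1).2
    have hΦs := hΦ₁pos s hs
    have hls := hlpos s hs
    have hC₄0 : (0:ℝ) < C₄ := by linarith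
    have hlr := hlpos r hr
    have hmul := mul_le_mul hbu hlu (by positivity) (by positivity)
    calc (Φ₁ r / Φ₁ s) * (l r / l s)
        ≤ (C₄ * (r/s) ^ (β₁s + ε/2)) * (C₅ * (r/s) ^ (min (ε/2) β₂)) := hmul
      _ = (C₄ * C₅) * (r/s) ^ ((β₁s + ε/2) + min (ε/2) β₂) := by
          rw [rpow_add hx (β₁s + ε/2) (min (ε/2) β₂)]; ring
      _ ≤ (C₄ * C₅) * (r/s) ^ (β₁s + ε) := by
          apply mul_le_mul_of_nonneg_left _ (by positivity)
          apply rpow_le_rpow_of_exponent_le hx1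
          have : min (ε/2) β₂ ≤ ε/2 := min_le_left _ _
          linarith
  obtain ⟨K₁, hK₁, hlb⟩ := hlow
  obtain ⟨K₂, hK₂, hub⟩ := hup
  refine ⟨K₁ * K₂, le_trans hK₁ (le_mul_of_one_le_right (by linarith) hK₂), ?_⟩
  intro s r hs hsr hr1
  have hr : 0 < r := lt_of_lt_of_le hs hsr
  have hΦs := hΦ₁pos s hs
  have hΦr := hΦ₁pos r hr
  have hls := hlpos s hs
  have hlr := hlpos r hr
  have hsplit : (Φ₁ r * l r) / (Φ₁ s * l s) = (Φ₁ r / Φ₁ s) * (l r / l s) :=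
    (div_mul_div_comm _ _ _ _).symm
  rw [hsplit]
  constructor
  · refine le_trans ?_ (hlb s r hs hsr hr1)
    have h1 : (K₁ * K₂)⁻¹ ≤ K₁⁻¹ :=
      inv_anti₀ (by linarith) (le_mul_of_one_le_right (by linarith) hK₂)
    exact mul_le_mul_of_nonneg_right h1 (by positivity)
  · refine (hub s r hs hsr hr1).trans ?_
    have h1 : K₂ ≤ K₁ * K₂ := le_mul_of_one_le_left (by linarith) hK₁
    exact mul_le_mul_of_nonneg_right h1 (by positivity)

set_option maxHeartbeats 1000000 in
/-- scaling of `Φ₀ = Φ₁·ℓ`, cf. (2.2) in the paper. -/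
theorem statement_18
    (β₁ β₁s β₂ β₂s : ℝ)
    (hβ₁ : 0 ≤ β₁) (hβ₁s : β₁ ≤ β₁s) (hβ₂ : 0 ≤ β₂) (hβ₂s : β₂ ≤ β₂s)
    (Φ₁ l : ℝ → ℝ)
    (hΦ₁ : StdFun Φ₁) (hΦ₁inc : AlmostIncreasingOn01 Φ₁)
    (hΦ₁low : LowerIndexIs Φ₁ β₁) (hΦ₁up : UpperIndexIs Φ₁ β₁s)
    (hl : StdFun l) (hlscale : EllScaling l β₁ β₂)
    (Φ₀ : ℝ → ℝ) (hΦ₀def : ∀ r : ℝ, Φ₀ r = Φ₁ r * l r) :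
    (∀ R η ε : ℝ, 1 ≤ R → 0 < η → η ≤ 1 → 0 < ε →
      ∃ C : ℝ, 1 ≤ C ∧ ∀ s r : ℝ, 0 < s → η * s ≤ r → r ≤ R →
        C⁻¹ * (r / s) ^ max (β₁ - ε) 0 ≤ Φ₀ r / Φ₀ s ∧
        Φ₀ r / Φ₀ s ≤ C * (r / s) ^ (β₁s + ε)) ∧
    AlmostIncreasingOn01 Φ₀ := by
  have hΦ₁pos := hΦ₁.2.1
  have hlpos := hl.2.1
  have hΦ₀pos : ∀ r : ℝ, 0 < r → 0 < Φ₀ r := by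
    intro r hr; rw [hΦ₀def]; exact mul_pos (hΦ₁pos r hr) (hlpos r hr)
  have hΦ₀one : ∀ r : ℝ, 1 ≤ r → Φ₀ r = 1 := by
    intro r hr; rw [hΦ₀def, hΦ₁.2.2 r hr, hl.2.2 r hr, one_mul]
  have hcore : ∀ ε : ℝ, 0 < ε → ∃ K : ℝ, 1 ≤ K ∧ ∀ s r : ℝ, 0 < s → s ≤ r → r ≤ 1 →
      K⁻¹ * (r/s) ^ max (β₁ - ε) 0 ≤ Φ₀ r / Φ₀ s ∧
      Φ₀ r / Φ₀ s ≤ K * (r/s) ^ (β₁s + ε) := by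
    intro ε hε
    obtain ⟨K, hK1, hK⟩ := core_scaling β₁ β₁s β₂ hβ₁ hβ₁s Φ₁ l hΦ₁pos hlpos hΦ₁inc
      hΦ₁low.1 hΦ₁up.1 hlscale ε hε
    exact ⟨K, hK1, fun s r hs hsr hr1 => by
      rw [hΦ₀def r, hΦ₀def s]; exact hK s r hs hsr hr1⟩
  have hainc : AlmostIncreasingOn01 Φ₀ := by
    obtain ⟨K, hK1, hK⟩ := hcore 1 one_pos
    refine ⟨K, hK1, fun s r hs hsr hr1 => ?_⟩
    have hr : 0 < r := lt_of_lt_of_le hs hsr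
    have h1 := (hK s r hs hsr hr1).1
    have hx1 : (1:ℝ) ≤ r / s := (one_le_div hs).2 hsr
    have h2 : K⁻¹ ≤ Φ₀ r / Φ₀ s := by
      refine le_trans ?_ h1
      linarith [mul_nonneg (inv_pos.2 (by linarith : (0:ℝ) < K)).le
        (sub_nonneg.2 (Real.one_le_rpow hx1 (le_max_right (β₁ - 1) 0)))]
    rw [le_div_iff₀ (hΦ₀pos s hs), inv_mul_le_iff₀ (by linarith : (0:ℝ) < K)] at h2
    exact h2
  refine ⟨?_, hainc⟩
  intro R η ε hR hη hη1 hε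
  obtain ⟨K, hK1, hK⟩ := hcore ε hε
  set γ := max (β₁ - ε) 0 with hγdef
  set δ := β₁s + ε with hδdef
  have hγ0 : 0 ≤ γ := le_max_right _ _
  have hδ0 : 0 < δ := by rw [hδdef]; linarith
  have hη2 : η ^ 2 ≤ 1 := by nlinarith
  set N := R / η ^ 2 with hNdef
  have hN0 : 0 < N := by positivity
  have hN1 : 1 ≤ N := by
    rw [hNdef, le_div_iff₀ (by positivity)]; linarith
  have hNγ1 : (1:ℝ) ≤ N ^ γ := Real.one_le_rpow hN1 hγ0
  have hNδ1 : (1:ℝ) ≤ N ^ δ := Real.one_le_rpow hN1 hδ0.le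
  have hNγ0 : (0:ℝ) < N ^ γ := by positivity
  have hNδ0 : (0:ℝ) < N ^ δ := by positivity
  have hNδδ1 : (1:ℝ) ≤ N ^ δ * N ^ δ := by
    linarith [mul_nonneg (sub_nonneg.2 hNδ1) (sub_nonneg.2 hNδ1)]
  set E := N ^ γ * (N ^ δ * N ^ δ) with hEdef
  have hE0 : (0:ℝ) < E := by positivity
  have hNγE : N ^ γ ≤ E := by
    rw [hEdef]; linarith [mul_nonneg hNγ0.le (sub_nonneg.2 hNδδ1)]
  have hNδE : N ^ δ ≤ E := by
    rw [hEdef]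
    linarith [mul_nonneg (mul_nonneg hNδ0.le hNδ0.le) (sub_nonneg.2 hNγ1),
      mul_nonneg hNδ0.le (sub_nonneg.2 hNδ1)]
  have hE1 : (1:ℝ) ≤ E := le_trans hNγ1 hNγE
  have hηN : 1 ≤ η * N := by
    have h : η * N = R / η := by rw [hNdef]; field_simp
    rw [h, le_div_iff₀ hη]; linarith
  refine ⟨K * E, le_trans hK1 (le_mul_of_one_le_right (by linarith) hE1), ?_⟩
  intro s r hs hηs hrR
  have hr : 0 < r := lt_of_lt_of_le (mul_pos hη hs) hηs
  set r' := min r 1 with hr'def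
  set s' := min s 1 with hs'def
  have hr'0 : 0 < r' := lt_min hr one_pos
  have hs'0 : 0 < s' := lt_min hs one_pos
  have hr'1 : r' ≤ 1 := min_le_right _ _
  have hs'1 : s' ≤ 1 := min_le_right _ _
  have hΦr : Φ₀ r = Φ₀ r' := by
    rcases le_total r 1 with h | h
    · rw [hr'def, min_eq_left h]
    · rw [hΦ₀one r h, hr'def, min_eq_right h, hΦ₀one 1 le_rfl]
  have hΦs : Φ₀ s = Φ₀ s' := by
    rcases le_total s 1 with h | h
    · rw [hs'def, min_eq_left h]
    · rw [hΦ₀one s h, hs'def, min_eq_right h, hΦ₀one 1 le_rfl]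
  have hu0 : (0:ℝ) < r / s := by positivity
  have hx0 : (0:ℝ) < r' / s' := by positivity
  have huη : η ≤ r / s := (le_div_iff₀ hs).2 hηs
  have haux1 : r * (η ^ 2 * s') ≤ R * r' * s := by
    rcases le_total r 1 with h1 | h1 <;> rcases le_total s 1 with h2 | h2
    · simp only [hr'def, hs'def, min_eq_left h1, min_eq_left h2]
      linarith [mul_nonneg (mul_nonneg hr.le hs.le) (sub_nonneg.2 hη2),
        mul_nonneg (mul_nonneg hr.le hs.le) (sub_nonneg.2 hR)]
    · simp only [hr'def, hs'def, min_eq_left h1, min_eq_right h2]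
      have hRs : (1:ℝ) ≤ R * s := by
        linarith [mul_nonneg (sub_nonneg.2 hR) (sub_nonneg.2 h2)]
      linarith [mul_nonneg hr.le (sub_nonneg.2 hη2),
        mul_nonneg hr.le (sub_nonneg.2 hRs)]
    · simp only [hr'def, hs'def, min_eq_right h1, min_eq_left h2]
      have hrη : r * η ^ 2 ≤ R := by
        linarith [mul_nonneg hr.le (sub_nonneg.2 hη2)]
      linarith [mul_nonneg hs.le (sub_nonneg.2 hrη)]
    · simp only [hr'def, hs'def, min_eq_right h1, min_eq_right h2]
      have hrη : r * η ^ 2 ≤ R := by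
        linarith [mul_nonneg hr.le (sub_nonneg.2 hη2)]
      linarith [mul_nonneg (sub_nonneg.2 h2) (by positivity : (0:ℝ) ≤ R)]
  have haux2 : r' * (η ^ 2 * s) ≤ R * r * s' := by
    rcases le_total r 1 with h1 | h1 <;> rcases le_total s 1 with h2 | h2
    · simp only [hr'def, hs'def, min_eq_left h1, min_eq_left h2]
      linarith [mul_nonneg (mul_nonneg hr.le hs.le) (sub_nonneg.2 hη2),
        mul_nonneg (mul_nonneg hr.le hs.le) (sub_nonneg.2 hR)]
    · simp only [hr'def, hs'def, min_eq_left h1, min_eq_right h2]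
      have h3 : η ^ 2 * s ≤ 1 := by
        have ha := mul_le_mul_of_nonneg_left hηs hη.le
        have hb := mul_le_mul_of_nonneg_right hη1 hr.le
        nlinarith
      linarith [mul_nonneg hr.le (sub_nonneg.2 h3),
        mul_nonneg hr.le (sub_nonneg.2 hR)]
    · simp only [hr'def, hs'def, min_eq_right h1, min_eq_left h2]
      have h3 : η ^ 2 ≤ R * r := by
        linarith [mul_nonneg hr.le (sub_nonneg.2 hR)]
      linarith [mul_nonneg hs.le (sub_nonneg.2 h3)]
    · simp only [hr'def, hs'def, min_eq_right h1, min_eq_right h2]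
      linarith [mul_le_mul_of_nonneg_left hηs hη.le,
        mul_le_mul_of_nonneg_right hη1 hr.le,
        mul_nonneg hr.le (sub_nonneg.2 hR)]
  have hux : r / s ≤ N * (r' / s') := by
    have heq : N * (r' / s') = (R * r') / (η ^ 2 * s') := by
      rw [hNdef]; field_simp
    rw [heq, div_le_div_iff₀ hs (by positivity)]
    exact haux1
  have hxu : r' / s' ≤ N * (r / s) := by
    have heq : N * (r / s) = (R * r) / (η ^ 2 * s) := by
      rw [hNdef]; field_simp
    rw [heq, div_le_div_iff₀ hs'0 (by positivity)]
    exact haux2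
  rw [hΦr, hΦs]
  rcases le_total s' r' with hcase | hcase
  · obtain ⟨hA1, hA2⟩ := hK s' r' hs'0 hcase hr'1
    constructor
    · refine le_trans ?_ hA1
      rw [mul_inv, mul_assoc]
      apply mul_le_mul_of_nonneg_left _ (by positivity)
      rw [inv_mul_le_iff₀ hE0]
      calc (r/s) ^ γ ≤ (N * (r'/s')) ^ γ := Real.rpow_le_rpow hu0.le hux hγ0
        _ = N ^ γ * (r'/s') ^ γ := Real.mul_rpow hN0.le hx0.le
        _ ≤ E * (r'/s') ^ γ := by
            linarith [mul_nonneg (sub_nonneg.2 hNγE) (Real.rpow_nonneg hx0.le γ)]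
    · refine hA2.trans ?_
      rw [mul_assoc]
      apply mul_le_mul_of_nonneg_left _ (by linarith)
      calc (r'/s') ^ δ ≤ (N * (r/s)) ^ δ := Real.rpow_le_rpow hx0.le hxu hδ0.le
        _ = N ^ δ * (r/s) ^ δ := Real.mul_rpow hN0.le hu0.le
        _ ≤ E * (r/s) ^ δ := by
            linarith [mul_nonneg (sub_nonneg.2 hNδE) (Real.rpow_nonneg hu0.le δ)]
  · obtain ⟨hB1, hB2⟩ := hK r' s' hr'0 hcase hs'1
    have hyge1 : (1:ℝ) ≤ s' / r' := (one_le_div hr'0).2 hcase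
    have hy0 : (0:ℝ) < s' / r' := by positivity
    have hyδ0 : (0:ℝ) < (s'/r') ^ δ := Real.rpow_pos_of_pos hy0 δ
    have hratio' : 0 < Φ₀ s' / Φ₀ r' := div_pos (hΦ₀pos s' hs'0) (hΦ₀pos r' hr'0)
    have hinv : Φ₀ r' / Φ₀ s' = (Φ₀ s' / Φ₀ r')⁻¹ := by rw [inv_div]
    have hxle1 : r' / s' ≤ 1 := (div_le_one hs'0).2 hcase
    have huN : r / s ≤ N := hux.trans (by linarith [mul_nonneg hN0.le (sub_nonneg.2 hxle1)])
    have hxlb : η / N ≤ r' / s' := by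
      rw [div_le_iff₀ hN0]
      calc η ≤ r / s := huη
        _ ≤ N * (r'/s') := hux
        _ = (r'/s') * N := mul_comm _ _
    have hyN : s' / r' ≤ N * N := by
      have h1 : (r'/s')⁻¹ ≤ (η/N)⁻¹ := inv_anti₀ (by positivity) hxlb
      have h2 : (η/N)⁻¹ = N / η := by rw [inv_div]
      have h3 : N / η ≤ N * N := by
        rw [div_le_iff₀ hη]; linarith [mul_nonneg hN0.le (sub_nonneg.2 hηN)]
      calc s'/r' = (r'/s')⁻¹ := by rw [inv_div]
        _ ≤ (η/N)⁻¹ := h1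
        _ = N / η := h2
        _ ≤ N * N := h3
    constructor
    · have hrat : K⁻¹ * ((s'/r') ^ δ)⁻¹ ≤ Φ₀ r' / Φ₀ s' := by
        rw [hinv, ← mul_inv]
        exact inv_anti₀ hratio' hB2
      refine le_trans ?_ hrat
      rw [mul_inv, mul_assoc]
      apply mul_le_mul_of_nonneg_left _ (by positivity)
      rw [inv_mul_le_iff₀ hE0]
      have h2 : (s'/r') ^ δ ≤ N ^ δ * N ^ δ := by
        calc (s'/r') ^ δ ≤ (N * N) ^ δ := Real.rpow_le_rpow hy0.le hyN hδ0.le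
          _ = N ^ δ * N ^ δ := Real.mul_rpow hN0.le hN0.le
      have h3 : N ^ γ * (s'/r') ^ δ ≤ E := by
        rw [hEdef]; exact mul_le_mul_of_nonneg_left h2 hNγ0.le
      have h4 : N ^ γ ≤ E * ((s'/r') ^ δ)⁻¹ := by
        rw [← div_eq_mul_inv, le_div_iff₀ hyδ0]; exact h3
      exact le_trans (Real.rpow_le_rpow hu0.le huN hγ0) h4
    · have hrat : Φ₀ r' / Φ₀ s' ≤ K := by
        rw [hinv]
        have h1 : K⁻¹ ≤ Φ₀ s' / Φ₀ r' := by
          refine le_trans ?_ hB1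
          linarith [mul_nonneg (inv_pos.2 (by linarith : (0:ℝ) < K)).le
            (sub_nonneg.2 (Real.one_le_rpow hyge1 hγ0))]
        calc (Φ₀ s' / Φ₀ r')⁻¹ ≤ (K⁻¹)⁻¹ := inv_anti₀ (by positivity) h1
          _ = K := inv_inv K
      refine hrat.trans ?_
      have hηδ : η ^ δ ≤ (r/s) ^ δ := Real.rpow_le_rpow hη.le huη hδ0.le
      have hNδηδ : 1 ≤ N ^ δ * η ^ δ := by
        calc (1:ℝ) = 1 ^ δ := (Real.one_rpow δ).symm
          _ ≤ (η * N) ^ δ := Real.rpow_le_rpow zero_le_one hηN hδ0.le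
          _ = η ^ δ * N ^ δ := Real.mul_rpow hη.le hN0.le
          _ = N ^ δ * η ^ δ := mul_comm _ _
      have hEηδ : 1 ≤ E * (r/s) ^ δ := by
        linarith [mul_nonneg (sub_nonneg.2 hNδE) (Real.rpow_nonneg hu0.le δ),
          mul_nonneg hNδ0.le (sub_nonneg.2 hηδ), hNδηδ]
      linarith [mul_nonneg (by linarith : (0:ℝ) ≤ K) (sub_nonneg.2 hEηδ)]
end
end

section
/- There exists a constant C > 0 such that for all x, y ∈ D with x ≠ y, writing m := δ_D(x) ∧ δ_D(y), M := δ_D(x) ∨ δ_D(y) and ρ := |x−y|, one has Φ₁(m/ρ) · Φ₂(M/ρ) · ℓ(m/(M ∧ ρ)) ≤ C · Φ₀(m/ρ). In particular, any symmetric function 𝓑 on D×D that is comparable (with uniform constants) to (x,y) ↦ Φ₁(m/ρ)Φ₂(M/ρ)ℓ(m/(M∧ρ)) satisfies 𝓑(x,y) ≤ C′ · Φ₀((δ_D(x)∧δ_D(y))/|x−y|) for some constant C′ > 0. -/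
open Set Metric MeasureTheory Real Filter Topology

noncomputable section

/-- cf. (2.7) in the paper: the boundary factor is dominated by
`Φ₀((δ_D(x)∧δ_D(y))/|x−y|)`, and consequently so is any comparable jump intensity `𝓑`. -/
theorem statement_19
    (d : ℕ) (hd : 2 ≤ d)
    (D : Set (EuclideanSpace ℝ (Fin d))) (hDopen : IsOpen D)
    (hDbdd : Bornology.IsBounded D)
    (β₁ β₁s β₂ β₂s : ℝ)
    (hβ₁ : 0 ≤ β₁) (hβ₁s : β₁ ≤ β₁s) (hβ₂ : 0 ≤ β₂) (hβ₂s : β₂ ≤ β₂s)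
    (Φ₁ Φ₂ l : ℝ → ℝ)
    (hΦ₁ : StdFun Φ₁) (hΦ₁inc : AlmostIncreasingOn01 Φ₁)
    (hΦ₁low : LowerIndexIs Φ₁ β₁) (hΦ₁up : UpperIndexIs Φ₁ β₁s)
    (hΦ₂ : StdFun Φ₂) (hΦ₂inc : AlmostIncreasingOn01 Φ₂)
    (hΦ₂low : LowerIndexIs Φ₂ β₂) (hΦ₂up : UpperIndexIs Φ₂ β₂s)
    (hl : StdFun l) (hlscale : EllScaling l β₁ β₂)
    (Φ₀ : ℝ → ℝ) (hΦ₀def : ∀ r : ℝ, Φ₀ r = Φ₁ r * l r) :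
    (∃ C : ℝ, 0 < C ∧ ∀ x ∈ D, ∀ y ∈ D, x ≠ y →
      Φ₁ (min (dd D x) (dd D y) / dist x y) * Φ₂ (max (dd D x) (dd D y) / dist x y) *
          l (min (dd D x) (dd D y) / min (max (dd D x) (dd D y)) (dist x y))
        ≤ C * Φ₀ (min (dd D x) (dd D y) / dist x y)) ∧
    (∀ B : EuclideanSpace ℝ (Fin d) → EuclideanSpace ℝ (Fin d) → ℝ,
      (∀ x y, B x y = B y x) →
      (∃ c : ℝ, 1 ≤ c ∧ ∀ x ∈ D, ∀ y ∈ D, x ≠ y →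
        c⁻¹ * (Φ₁ (min (dd D x) (dd D y) / dist x y) *
              Φ₂ (max (dd D x) (dd D y) / dist x y) *
              l (min (dd D x) (dd D y) / min (max (dd D x) (dd D y)) (dist x y)))
            ≤ B x y ∧
          B x y ≤ c * (Φ₁ (min (dd D x) (dd D y) / dist x y) *
              Φ₂ (max (dd D x) (dd D y) / dist x y) *
              l (min (dd D x) (dd D y) / min (max (dd D x) (dd D y)) (dist x y)))) →
      ∃ C' : ℝ, 0 < C' ∧ ∀ x ∈ D, ∀ y ∈ D, x ≠ y →
        B x y ≤ C' * Φ₀ (min (dd D x) (dd D y) / dist x y)) := by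
  obtain ⟨-, hΦ₁pos, hΦ₁one⟩ := hΦ₁
  obtain ⟨-, hΦ₂pos, hΦ₂one⟩ := hΦ₂
  obtain ⟨-, hlpos, hlone⟩ := hl
  -- Key analytic lemma: Φ₂(M/ρ) ℓ(m/M) ≤ K ℓ(m/ρ) when 0 < m ≤ M < ρ.
  have keyA : ∃ K : ℝ, 1 ≤ K ∧ ∀ m M ρ : ℝ, 0 < m → m ≤ M → M < ρ →
      Φ₂ (M / ρ) * l (m / M) ≤ K * l (m / ρ) := by
    rcases eq_or_lt_of_le hβ₂ with hβ0 | hβpos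
    · -- β₂ = 0 : use almost increasing for Φ₂ and trivial ℓ-scaling
      obtain ⟨C₂, hC₂1, hC₂⟩ := hΦ₂inc
      obtain ⟨Cl, hCl1, hCl⟩ := hlscale 1 one_pos
      refine ⟨C₂ * Cl, by nlinarith, ?_⟩
      intro m M ρ hm hmM hMρ
      have hM : 0 < M := lt_of_lt_of_le hm hmM
      have hρ : 0 < ρ := hM.trans hMρ
      have h1 : Φ₂ (M / ρ) ≤ C₂ := by
        have := hC₂ (M / ρ) 1 (by positivity) (le_of_lt ((div_lt_one hρ).2 hMρ)) le_rfl
        rwa [hΦ₂one 1 le_rfl, mul_one] at this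
      have hsle : m / ρ ≤ m / M := by gcongr
      have h2 : l (m / M) ≤ Cl * l (m / ρ) := by
        have := (hCl (m / ρ) (m / M) (by positivity) hsle ((div_le_one hM).2 hmM)).2
        rw [← hβ0, min_comm, min_eq_left zero_le_one, Real.rpow_zero, mul_one] at this
        have hls : 0 < l (m / ρ) := hlpos _ (by positivity)
        calc l (m / M) = l (m / M) / l (m / ρ) * l (m / ρ) := by field_simp
          _ ≤ Cl * l (m / ρ) := mul_le_mul_of_nonneg_right this hls.le
      calc Φ₂ (M / ρ) * l (m / M) ≤ C₂ * (Cl * l (m / ρ)) := by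
            apply mul_le_mul h1 h2 (hlpos _ (by positivity)).le (by linarith)
        _ = C₂ * Cl * l (m / ρ) := by ring
    · -- β₂ > 0 : use the lower scaling of Φ₂ with exponent β₂/2 against ℓ's growth
      obtain ⟨C₂, hC₂1, hC₂⟩ := hΦ₂low.1 (β₂ / 2) (by linarith)
      obtain ⟨Cl, hCl1, hCl⟩ := hlscale (β₂ / 2) (by linarith)
      refine ⟨C₂ * Cl, by nlinarith, ?_⟩
      intro m M ρ hm hmM hMρ
      have hM : 0 < M := lt_of_lt_of_le hm hmM
      have hρ : 0 < ρ := hM.trans hMρ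
      have hΦpos : 0 < Φ₂ (M / ρ) := hΦ₂pos _ (by positivity)
      have hQpos : (0 : ℝ) < (ρ / M) ^ (β₂ / 2) := by positivity
      have h1 : Φ₂ (M / ρ) * (ρ / M) ^ (β₂ / 2) ≤ C₂ := by
        have := hC₂ (M / ρ) 1 (by positivity) (le_of_lt ((div_lt_one hρ).2 hMρ)) le_rfl
        rw [hΦ₂one 1 le_rfl, one_div, inv_div] at this
        -- this : C₂⁻¹ * (ρ/M)^(β₂/2) ≤ 1 / Φ₂ (M/ρ)
        have hC₂pos : 0 < C₂ := lt_of_lt_of_le one_pos hC₂1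
        have h' : C₂⁻¹ * (ρ / M) ^ (β₂ / 2) * Φ₂ (M / ρ) ≤ 1 := by
          calc C₂⁻¹ * (ρ / M) ^ (β₂ / 2) * Φ₂ (M / ρ)
              ≤ 1 / Φ₂ (M / ρ) * Φ₂ (M / ρ) := mul_le_mul_of_nonneg_right this hΦpos.le
            _ = 1 := by field_simp
        calc Φ₂ (M / ρ) * (ρ / M) ^ (β₂ / 2)
            = C₂ * (C₂⁻¹ * (ρ / M) ^ (β₂ / 2) * Φ₂ (M / ρ)) := by
              field_simp
          _ ≤ C₂ * 1 := mul_le_mul_of_nonneg_left h' hC₂pos.le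
          _ = C₂ := mul_one _
      have hsle : m / ρ ≤ m / M := by gcongr
      have h2 : l (m / M) ≤ Cl * (ρ / M) ^ (β₂ / 2) * l (m / ρ) := by
        have := (hCl (m / ρ) (m / M) (by positivity) hsle ((div_le_one hM).2 hmM)).2
        rw [min_eq_left (by linarith)] at this
        have hratio : m / M / (m / ρ) = ρ / M := by
          have hm' := ne_of_gt hm
          have hM' := ne_of_gt hM
          have hρ' := ne_of_gt hρ
          field_simp
        rw [hratio] at this
        have hls : 0 < l (m / ρ) := hlpos _ (by positivity)
        calc l (m / M) = l (m / M) / l (m / ρ) * l (m / ρ) := by field_simp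
          _ ≤ Cl * (ρ / M) ^ (β₂ / 2) * l (m / ρ) := mul_le_mul_of_nonneg_right this hls.le
      have hls : 0 < l (m / ρ) := hlpos _ (by positivity)
      calc Φ₂ (M / ρ) * l (m / M)
          ≤ Φ₂ (M / ρ) * (Cl * (ρ / M) ^ (β₂ / 2) * l (m / ρ)) :=
            mul_le_mul_of_nonneg_left h2 hΦpos.le
        _ = Cl * (Φ₂ (M / ρ) * (ρ / M) ^ (β₂ / 2)) * l (m / ρ) := by ring
        _ ≤ Cl * C₂ * l (m / ρ) := by
            apply mul_le_mul_of_nonneg_right _ hls.le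
            apply mul_le_mul_of_nonneg_left h1 (by linarith)
        _ = C₂ * Cl * l (m / ρ) := by ring
  obtain ⟨K, hK1, hK⟩ := keyA
  -- positivity of the distance to the boundary
  have hddpos : ∀ x ∈ D, 0 < dd D x := by
    intro x hx
    have hne : D.Nonempty := ⟨x, hx⟩
    have hnuniv : D ≠ univ := by
      intro h
      haveI : Nonempty (Fin d) := ⟨⟨0, by omega⟩⟩
      exact NormedSpace.unbounded_univ ℝ (EuclideanSpace ℝ (Fin d)) (h ▸ hDbdd)
    have hfr : (frontier D).Nonempty := nonempty_frontier_iff.2 ⟨hne, hnuniv⟩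
    have hxnot : x ∉ frontier D := by
      rw [hDopen.frontier_eq]
      simp only [mem_diff, not_and, not_not]
      intro hxc
      exact interior_eq_iff_isOpen.2 hDopen ▸ hx
    exact (isClosed_frontier.notMem_iff_infDist_pos hfr).1 hxnot
  -- the main estimate
  have main : ∀ x ∈ D, ∀ y ∈ D, x ≠ y →
      Φ₁ (min (dd D x) (dd D y) / dist x y) * Φ₂ (max (dd D x) (dd D y) / dist x y) *
          l (min (dd D x) (dd D y) / min (max (dd D x) (dd D y)) (dist x y))
        ≤ K * Φ₀ (min (dd D x) (dd D y) / dist x y) := by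
    intro x hx y hy hxy
    set m := min (dd D x) (dd D y) with hm_def
    set M := max (dd D x) (dd D y) with hM_def
    set ρ := dist x y with hρ_def
    have hm : 0 < m := lt_min (hddpos x hx) (hddpos y hy)
    have hmM : m ≤ M := min_le_max
    have hρ : 0 < ρ := dist_pos.2 hxy
    have hΦ₁p : 0 < Φ₁ (m / ρ) := hΦ₁pos _ (by positivity)
    have hΦ₀rw : Φ₀ (m / ρ) = Φ₁ (m / ρ) * l (m / ρ) := hΦ₀def _
    rcases le_or_gt ρ M with hle | hlt
    · -- M ≥ ρ : everything collapses
      rw [min_eq_right hle, hΦ₂one _ ((one_le_div hρ).2 hle), mul_one, hΦ₀rw]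
      have h0 : (0 : ℝ) ≤ Φ₁ (m / ρ) * l (m / ρ) :=
        mul_nonneg hΦ₁p.le (hlpos _ (by positivity)).le
      nlinarith
    · rw [min_eq_left hlt.le, hΦ₀rw]
      have := hK m M ρ hm hmM hlt
      calc Φ₁ (m / ρ) * Φ₂ (M / ρ) * l (m / M)
          = Φ₁ (m / ρ) * (Φ₂ (M / ρ) * l (m / M)) := by ring
        _ ≤ Φ₁ (m / ρ) * (K * l (m / ρ)) := mul_le_mul_of_nonneg_left this hΦ₁p.le
        _ = K * (Φ₁ (m / ρ) * l (m / ρ)) := by ring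
  refine ⟨⟨K, lt_of_lt_of_le one_pos hK1, main⟩, ?_⟩
  intro B _hsym ⟨c, hc1, hc⟩
  refine ⟨c * K, by positivity, ?_⟩
  intro x hx y hy hxy
  calc B x y ≤ c * (Φ₁ (min (dd D x) (dd D y) / dist x y) *
        Φ₂ (max (dd D x) (dd D y) / dist x y) *
        l (min (dd D x) (dd D y) / min (max (dd D x) (dd D y)) (dist x y))) :=
        (hc x hx y hy hxy).2
    _ ≤ c * (K * Φ₀ (min (dd D x) (dd D y) / dist x y)) := by
        apply mul_le_mul_of_nonneg_left (main x hx y hy hxy) (by linarith)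
    _ = c * K * Φ₀ (min (dd D x) (dd D y) / dist x y) := by ring
end
end
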